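/- arXiv:math/0410425 — 3 statements merged into one kernel-verified Lean document; each statement's English description precedes it below -/
import Mathlib

section
/- The class of multi-path matroids is closed under deletion: if M is a multi-path matroid on S and x ∈ S, then M \ x is a multi-path matroid. -/
open Set Matroid

variable {α ι : Type*}

/-- `M` is the transversal matroid on ground set `S` presented by the set system `A`:
the independent sets of `M` are exactly the partial transversals of `A`. -/
def IsTransversalPres (M : Matroid α) (S : Set α) (A : ι → Set α) : Prop :=
  M.E = S ∧ ∀ I : Set α, M.Indep I ↔ I ⊆ S ∧
    ∃ φ : I → ι, Function.Injective φ ∧ ∀ x : I, (x : α) ∈ A (φ x)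

/-- `σ` is a cyclic permutation of the set `E`. -/
def IsCyclicOn (σ : Equiv.Perm α) (E : Set α) : Prop :=
  (∀ x ∉ E, σ x = x) ∧ ∀ x ∈ E, ∀ y ∈ E, ∃ n : ℕ, (σ ^ n) x = y

/-- `I` is the σ-interval with first element `f` and last element `l`. -/
def IsCycInterval (σ : Equiv.Perm α) (f l : α) (I : Set α) : Prop :=
  ∃ k : ℕ, (σ ^ k) f = l ∧ I = {x | ∃ j ≤ k, (σ ^ j) f = x}

/-- The family of sets `A` is an antichain: no member contains another. -/
def IsSetAntichain (A : ι → Set α) : Prop := ∀ i j, i ≠ j → ¬ A i ⊆ A j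

/-- `A` (with first elements `f` and last elements `l`) is a presentation of `M` by an
antichain of σ-intervals in the cyclic permutation `σ` of the ground set. -/
def IsMultiPathPres (M : Matroid α) (σ : Equiv.Perm α) {r : ℕ}
    (f l : Fin r → α) (A : Fin r → Set α) : Prop :=
  IsCyclicOn σ M.E ∧ (∀ i, f i ∈ M.E) ∧ (∀ i, IsCycInterval σ (f i) (l i) (A i)) ∧
  IsSetAntichain A ∧ IsTransversalPres M M.E A

/-- A multi-path matroid: a transversal matroid with a presentation by an antichain of
σ-intervals in some cyclic permutation of the ground set. -/
def IsMultiPath (M : Matroid α) : Prop :=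
  ∃ (σ : Equiv.Perm α) (r : ℕ) (f : Fin r → α) (l : Fin r → α) (A : Fin r → Set α),
    IsMultiPathPres M σ f l A

/-- A lattice path matroid: a transversal matroid with a presentation by an antichain of
(nonempty) intervals in some linear order (encoded by an injection `g` into `ℕ`) on the
ground set. -/
def IsLatticePathM (M : Matroid α) : Prop :=
  ∃ g : α → ℕ, Set.InjOn g M.E ∧
    ∃ (r : ℕ) (A : Fin r → Set α) (a b : Fin r → ℕ),
      (∀ i, A i = {x ∈ M.E | a i ≤ g x ∧ g x ≤ b i}) ∧ (∀ i, (A i).Nonempty) ∧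
      IsSetAntichain A ∧ IsTransversalPres M M.E A

/-- Deletion `M \ X`. -/
def mDelete (M : Matroid α) (X : Set α) : Matroid α := M ↾ (M.E \ X)

/-- Contraction `M / X`. -/
def mContract (M : Matroid α) (X : Set α) : Matroid α := (mDelete M✶ X)✶

/-- `N` is a minor of `M`. -/
def IsMinorOf (N M : Matroid α) : Prop :=
  ∃ C D : Set α, C ⊆ M.E ∧ D ⊆ M.E ∧ Disjoint C D ∧ N = mDelete (mContract M C) D

/-- `C` is a circuit of `M`: a minimal dependent set. -/
def IsCircuitOf (M : Matroid α) (C : Set α) : Prop :=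
  M.Dep C ∧ ∀ D ⊂ C, ¬ M.Dep D

/-- `C` is a cocircuit of `M`: a circuit of the dual. -/
def IsCocircuitOf (M : Matroid α) (C : Set α) : Prop := IsCircuitOf M✶ C

/-- `M` is connected: it has no loops and every pair of distinct elements of the
ground set lies in a common circuit. -/
def IsConnectedM (M : Matroid α) : Prop :=
  (∀ e ∈ M.E, M.Indep {e}) ∧
  ∀ x ∈ M.E, ∀ y ∈ M.E, x ≠ y → ∃ C, IsCircuitOf M C ∧ x ∈ C ∧ y ∈ C

/-- The height of the lattice path with set of North steps `w` after its first `t` steps. -/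
noncomputable def pathHt {n : ℕ} (w : Set (Fin n)) (t : ℕ) : ℕ := (w ∩ {j | (j : ℕ) < t}).ncard

/-- `w` is (the set of North steps of) a lattice path from `(0,0)` to `(m,r)` going
neither below `P` nor above `Q`. -/
def IsPathBetween (m r : ℕ) (P Q w : Set (Fin (m + r))) : Prop :=
  pathHt w (m + r) = r ∧ ∀ t ≤ m + r, pathHt P t ≤ pathHt w t ∧ pathHt w t ≤ pathHt Q t

/-- The data `(k, m, r, P, Q)` is a diagram: `P` and `Q` are lattice paths with `m` East
and `r` North steps (starting at `p_1 = (k-1,0)` and `p_k = (0,k-1)` respectively) and,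
comparing heights along antidiagonals, `Q` never goes below `P`. -/
def IsDiagram (k m r : ℕ) (P Q : Set (Fin (m + r))) : Prop :=
  1 ≤ k ∧ pathHt P (m + r) = r ∧ pathHt Q (m + r) = r ∧
    ∀ t ≤ m + r, pathHt P t ≤ k - 1 + pathHt Q t

/-- `w` is a b-path of the diagram `(k, m, r, P, Q)` from the starting point
`p_i = (k-i, i-1)` to the ending point `p'_i`: it stays weakly above `P` and weakly
below `Q` (heights compared along antidiagonals). -/
def IsBPath (k m r : ℕ) (P Q : Set (Fin (m + r))) (i : ℕ) (w : Set (Fin (m + r))) : Prop :=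
  1 ≤ i ∧ i ≤ k ∧ pathHt w (m + r) = r ∧
  ∀ t ≤ m + r, pathHt P t ≤ i - 1 + pathHt w t ∧ i - 1 + pathHt w t ≤ k - 1 + pathHt Q t

/-- A matroid isomorphism between matroids on possibly different types. -/
def MatroidIso {β : Type*} (M : Matroid α) (N : Matroid β) : Prop :=
  ∃ e : α → β, Set.BijOn e M.E N.E ∧ ∀ B ⊆ M.E, (M.IsBase B ↔ N.IsBase (e '' B))

/-- `b` is the first element of `X` encountered strictly after `a` in the cyclic order `σ`
(i.e. `b` is the image of `a` under the cyclic permutation induced by `σ` on `X`). -/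
def CycNextIn (σ : Equiv.Perm α) (X : Set α) (a b : α) : Prop :=
  ∃ n : ℕ, 1 ≤ n ∧ (σ ^ n) a = b ∧ ∀ j, 1 ≤ j → j < n → (σ ^ j) a ∉ X

/-!
Let `τ = skipPerm σ x` be `σ` with `x` cut out of its cycle. The sets `A i \ {x}` are
τ-intervals presenting `M \ x`, but they may be nested. If `e` lies in a member contained in
another member `B`, deleting `e` from `B` changes no partial transversal, and if `e` is an
endpoint of `B` the result is again an interval. A nesting `A p \ {x} ⊆ A q \ {x}` forces
`x ∈ A p` and `x ∉ A q`, so the inner set contains a σ-neighbor of `x`, which is a τ-endpoint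
of `A q` unless `A q` is the whole cycle minus `x`. After at most one preliminary deletion from
that member every nesting has such an endpoint, and this persists when the endpoints are deleted
from a maximal outer member. Deleting them one at a time and discarding the empty members leaves
an antichain of τ-intervals presenting `M \ x`.
-/

open Equiv Function

section OrbitSeg

variable {τ : Perm α} {a e : α} {n : ℕ} {S T : Set α}

/-- `orbitSeg τ a (k + 1)` is the τ-interval `[a, τ^k a]`, and `orbitSeg τ a 0 = ∅`. -/
def orbitSeg (τ : Perm α) (a : α) (n : ℕ) : Set α := {y | ∃ t < n, (τ ^ t) a = y}

def IsOrbitSeg (τ : Perm α) (S : Set α) : Prop := ∃ a n, S = orbitSeg τ a n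

def IsEndpoint (τ : Perm α) (S : Set α) (e : α) : Prop := τ e ∉ S ∨ τ⁻¹ e ∉ S

theorem pow_apply_mem_orbitSeg {t : ℕ} (ht : t < n) : (τ ^ t) a ∈ orbitSeg τ a n := ⟨t, ht, rfl⟩

theorem mem_orbitSeg_succ_self : a ∈ orbitSeg τ a (n + 1) := ⟨0, n.succ_pos, rfl⟩

theorem orbitSeg_zero : orbitSeg τ a 0 = ∅ := by simp [orbitSeg]

theorem orbitSeg_succ : orbitSeg τ a (n + 1) = insert a (orbitSeg τ (τ a) n) := by
  ext y
  constructor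
  · rintro ⟨_ | t, ht, rfl⟩
    · simp
    · exact Or.inr ⟨t, by omega, by rw [pow_succ, Perm.mul_apply]⟩
  · rintro (rfl | ⟨t, ht, rfl⟩)
    · exact ⟨0, by omega, rfl⟩
    · exact ⟨t + 1, by omega, by rw [pow_succ, Perm.mul_apply]⟩

theorem setOf_exists_le_eq_orbitSeg :
    {y | ∃ j ≤ n, (τ ^ j) a = y} = orbitSeg τ a (n + 1) := by
  simp only [orbitSeg, Nat.lt_succ_iff]

theorem inv_pow_apply_pow {s : ℕ} (h : s ≤ n) : (τ⁻¹ ^ s) ((τ ^ n) a) = (τ ^ (n - s)) a := by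
  rw [inv_pow, Perm.inv_eq_iff_eq, ← Perm.mul_apply, ← pow_add, Nat.add_sub_cancel' h]

theorem orbitSeg_inv : orbitSeg τ⁻¹ ((τ ^ n) a) (n + 1) = orbitSeg τ a (n + 1) := by
  ext y
  constructor
  · rintro ⟨s, hs, rfl⟩
    rw [inv_pow_apply_pow (by omega)]
    exact pow_apply_mem_orbitSeg (by omega)
  · rintro ⟨t, ht, rfl⟩
    refine ⟨n - t, by omega, ?_⟩
    rw [inv_pow_apply_pow (by omega), Nat.sub_sub_self (by omega)]

theorem inv_apply_eq_of_pow_succ_apply {k : ℕ} (h : (τ ^ (k + 1)) a = a) :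
    τ⁻¹ a = (τ ^ k) a := by
  rw [pow_succ', Perm.mul_apply] at h
  exact Perm.inv_eq_iff_eq.mpr h.symm

theorem eq_of_mem_orbitSeg_of_inv_notMem (he : e ∈ orbitSeg τ a n)
    (h : τ⁻¹ e ∉ orbitSeg τ a n) : e = a := by
  obtain ⟨_ | t, ht, rfl⟩ := he
  · rfl
  · refine absurd ⟨t, by omega, ?_⟩ h
    simp [pow_succ']

theorem notMem_orbitSeg_apply_of_inv_notMem (h : τ⁻¹ a ∉ orbitSeg τ a (n + 1)) :
    a ∉ orbitSeg τ (τ a) n := by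
  rintro ⟨s, hs, hsa⟩
  refine h ⟨s, by omega, (inv_apply_eq_of_pow_succ_apply ?_).symm⟩
  rwa [pow_succ, Perm.mul_apply]

theorem orbitSeg_succ_sdiff_self (h : τ⁻¹ a ∉ orbitSeg τ a (n + 1)) :
    orbitSeg τ a (n + 1) \ {a} = orbitSeg τ (τ a) n := by
  rw [orbitSeg_succ, insert_sdiff_self_of_notMem (notMem_orbitSeg_apply_of_inv_notMem h)]

theorem pow_apply_notMem_orbitSeg (h : τ⁻¹ a ∉ orbitSeg τ a n) :
    (τ ^ n) a ∉ orbitSeg τ a n := by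
  rintro ⟨s, hs, hsn⟩
  refine h ⟨n - s - 1, by omega, (inv_apply_eq_of_pow_succ_apply ?_).symm⟩
  have : (τ ^ s) ((τ ^ (n - s)) a) = (τ ^ s) a := by
    rw [← Perm.mul_apply, ← pow_add, Nat.add_sub_cancel' hs.le, hsn]
  rw [Nat.sub_add_cancel (by omega)]
  exact (τ ^ s).injective this

theorem IsEndpoint.anti (h : IsEndpoint τ S e) (hTS : T ⊆ S) : IsEndpoint τ T e :=
  h.imp (mt (hTS ·)) (mt (hTS ·))

theorem isEndpoint_inv_iff : IsEndpoint τ⁻¹ S e ↔ IsEndpoint τ S e := by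
  simp only [IsEndpoint, inv_inv, or_comm]

theorem IsOrbitSeg.finite (hS : IsOrbitSeg τ S) : S.Finite := by
  obtain ⟨a, n, rfl⟩ := hS
  exact (finite_Iio n).image _

theorem IsOrbitSeg.inv (hS : IsOrbitSeg τ S) : IsOrbitSeg τ⁻¹ S := by
  obtain ⟨a, _ | n, rfl⟩ := hS
  · exact ⟨a, 0, by simp only [orbitSeg_zero]⟩
  · exact ⟨(τ ^ n) a, n + 1, orbitSeg_inv.symm⟩

theorem isOrbitSeg_inv_iff : IsOrbitSeg τ⁻¹ S ↔ IsOrbitSeg τ S :=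
  ⟨fun h => by simpa using h.inv, IsOrbitSeg.inv⟩

theorem IsOrbitSeg.exists_eq_succ (hS : IsOrbitSeg τ S) (hne : S.Nonempty) :
    ∃ a n, S = orbitSeg τ a (n + 1) := by
  obtain ⟨a, _ | n, rfl⟩ := hS
  · simp [orbitSeg_zero] at hne
  · exact ⟨a, n, rfl⟩

theorem IsOrbitSeg.sdiff_singleton (hS : IsOrbitSeg τ S) (he : e ∈ S)
    (hend : IsEndpoint τ S e) : IsOrbitSeg τ (S \ {e}) := by
  wlog h : τ⁻¹ e ∉ S generalizing τ
  · -- `τ⁻¹` runs through the same segments backwards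
    exact isOrbitSeg_inv_iff.1 <|
      this hS.inv (isEndpoint_inv_iff.2 hend) (by simpa using hend.resolve_right h)
  obtain ⟨a, _ | n, rfl⟩ := hS
  · simp [orbitSeg_zero] at he
  obtain rfl := eq_of_mem_orbitSeg_of_inv_notMem he h
  exact ⟨τ e, n, orbitSeg_succ_sdiff_self h⟩

theorem IsOrbitSeg.exists_adjacent (hS : IsOrbitSeg τ S) (he : e ∈ S)
    (hne : (S \ {e}).Nonempty) : ∃ y ∈ S \ {e}, τ y = e ∨ τ⁻¹ y = e := by
  obtain ⟨a, n, rfl⟩ := hS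
  obtain ⟨t, ht, rfl⟩ := he
  obtain ⟨_, ⟨s, hs, rfl⟩, hse⟩ := hne
  have hfix : τ a ≠ a := fun h => hse (by simp [Perm.pow_apply_eq_self_of_apply_eq_self h])
  cases t with
  | zero =>
    have hs0 : s ≠ 0 := by rintro rfl; exact hse rfl
    exact ⟨τ a, ⟨⟨1, by omega, by simp⟩, by simpa using hfix⟩, Or.inr (by simp)⟩
  | succ t =>
    refine ⟨(τ ^ t) a, ⟨pow_apply_mem_orbitSeg (by omega), fun h => hfix ?_⟩,
      Or.inl (by rw [pow_succ', Perm.mul_apply])⟩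
    rw [mem_singleton_iff, pow_succ, Perm.mul_apply] at h
    exact ((τ ^ t).injective h).symm

theorem IsOrbitSeg.exists_endpoint_of_notMem (hS : IsOrbitSeg τ S) (he : e ∈ S)
    (hne : (S \ {e}).Nonempty) (heT : e ∉ T) : ∃ y ∈ S \ {e}, IsEndpoint τ T y := by
  obtain ⟨y, hy, hadj | hadj⟩ := hS.exists_adjacent he hne
  · exact ⟨y, hy, Or.inl (hadj ▸ heT)⟩
  · exact ⟨y, hy, Or.inr (hadj ▸ heT)⟩

theorem IsOrbitSeg.exists_endpoint_diff (hS : IsOrbitSeg τ S) (he : e ∈ S)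
    (hend : IsEndpoint τ S e) (hne : (S \ {e}).Nonempty) : ∃ y ∈ S \ {e}, IsEndpoint τ S y := by
  wlog h : τ⁻¹ e ∉ S generalizing τ
  · obtain ⟨y, hy, hend'⟩ :=
      this hS.inv (isEndpoint_inv_iff.2 hend) (by simpa using hend.resolve_right h)
    exact ⟨y, hy, isEndpoint_inv_iff.1 hend'⟩
  obtain ⟨a, n, rfl⟩ := hS
  obtain rfl := eq_of_mem_orbitSeg_of_inv_notMem he h
  obtain ⟨_, ⟨s, hs, rfl⟩, hse⟩ := hne
  have hs0 : s ≠ 0 := by rintro rfl; exact hse rfl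
  have hlast : τ ((τ ^ (n - 1)) e) ∉ orbitSeg τ e n := by
    rw [← Perm.mul_apply, ← pow_succ', Nat.sub_add_cancel (by omega)]
    exact pow_apply_notMem_orbitSeg h
  refine ⟨(τ ^ (n - 1)) e, ⟨pow_apply_mem_orbitSeg (by omega), fun h1 => hlast ?_⟩, Or.inl hlast⟩
  rw [mem_singleton_iff.1 h1]
  exact ⟨1, by omega, by simp⟩

end OrbitSeg

section PartialTransversal

variable {κ : Type*} {A B : ι → Set α} {I X : Set α}

def IsPartialTransversal (A : ι → Set α) (I : Set α) : Prop :=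
  ∃ φ : I → ι, Injective φ ∧ ∀ v : I, (v : α) ∈ A (φ v)

theorem IsPartialTransversal.mono (h : IsPartialTransversal A I) (hAB : ∀ k, A k ⊆ B k) :
    IsPartialTransversal B I := by
  obtain ⟨φ, hφ, hmem⟩ := h
  exact ⟨φ, hφ, fun v => hAB _ (hmem v)⟩

theorem isPartialTransversal_sdiff_iff (hI : Disjoint I X) :
    IsPartialTransversal (A · \ X) I ↔ IsPartialTransversal A I := by
  refine ⟨fun h => h.mono fun _ => sdiff_subset, fun ⟨φ, hφ, hmem⟩ => ⟨φ, hφ, fun v => ?_⟩⟩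
  exact ⟨hmem v, hI.notMem_of_mem_left v.2⟩

theorem update_sdiff_singleton_subset [DecidableEq ι] (j : ι) (e : α) (k : ι) :
    update B j (B j \ {e}) k ⊆ B k := by
  rcases eq_or_ne k j with rfl | hk
  · simp
  · rw [update_of_ne hk]

/-- A matching that uses `e` for `j` is rerouted through the swap of `i` and `j`. -/
theorem isPartialTransversal_update_sdiff_iff [DecidableEq ι] {i j : ι} {e : α} (hij : i ≠ j)
    (he : e ∈ B i) (hsub : B i ⊆ B j) :
    IsPartialTransversal (update B j (B j \ {e})) I ↔ IsPartialTransversal B I := by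
  refine ⟨fun h => h.mono (update_sdiff_singleton_subset j e), fun ⟨φ, hφ, hmem⟩ => ?_⟩
  by_cases huse : ∃ v₀ : I, φ v₀ = j ∧ (v₀ : α) = e
  · obtain ⟨v₀, hv₀j, hv₀e⟩ := huse
    refine ⟨swap i j ∘ φ, (swap i j).injective.comp hφ, fun v => ?_⟩
    rcases eq_or_ne (φ v) j with hvj | hvj
    · obtain rfl : v = v₀ := hφ (hvj.trans hv₀j.symm)
      simpa [hvj, update_of_ne hij, hv₀e] using he
    rcases eq_or_ne (φ v) i with hvi | hvi
    · have hve : (v : α) ≠ e := fun h =>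
        hij (hvi.symm.trans ((congrArg φ (Subtype.ext (h.trans hv₀e.symm))).trans hv₀j))
      simpa [hvi] using ⟨hsub (hvi ▸ hmem v), hve⟩
    · simpa [swap_apply_of_ne_of_ne hvi hvj, update_of_ne hvj] using hmem v
  · push Not at huse
    refine ⟨φ, hφ, fun v => ?_⟩
    rcases eq_or_ne (φ v) j with hvj | hvj
    · rw [hvj, update_self]
      exact ⟨hvj ▸ hmem v, huse v hvj⟩
    · rw [update_of_ne hvj]
      exact hmem v

theorem isPartialTransversal_comp_iff {g : κ → ι} (hg : Injective g)
    (hrange : ∀ k, (A k).Nonempty → k ∈ range g) :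
    IsPartialTransversal (A ∘ g) I ↔ IsPartialTransversal A I := by
  refine ⟨fun ⟨φ, hφ, hmem⟩ => ⟨g ∘ φ, hg.comp hφ, hmem⟩, fun ⟨φ, hφ, hmem⟩ => ?_⟩
  choose ψ hψ using fun v : I => hrange (φ v) ⟨v, hmem v⟩
  refine ⟨ψ, fun v w h => hφ ?_, fun v => ?_⟩
  · rw [← hψ v, ← hψ w, h]
  · simpa [hψ v] using hmem v

theorem IsTransversalPres.congr {M : Matroid α} {S : Set α} {C : κ → Set α}
    (h : IsTransversalPres M S A)
    (hAC : ∀ I, IsPartialTransversal A I ↔ IsPartialTransversal C I) : IsTransversalPres M S C :=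
  ⟨h.1, fun I => (h.2 I).trans (and_congr_right fun _ => hAC I)⟩

theorem IsTransversalPres.delete {M : Matroid α} (h : IsTransversalPres M M.E A) (x : α) :
    IsTransversalPres (mDelete M {x}) (M.E \ {x}) (A · \ {x}) := by
  refine ⟨restrict_ground_eq, fun I => ?_⟩
  rw [mDelete, restrict_indep_iff, h.2 I]
  constructor
  · rintro ⟨⟨-, hI⟩, hIE⟩
    exact ⟨hIE, (isPartialTransversal_sdiff_iff (subset_sdiff.1 hIE).2).2 hI⟩
  · rintro ⟨hIE, hI⟩
    exact ⟨⟨hIE.trans sdiff_subset, (isPartialTransversal_sdiff_iff (subset_sdiff.1 hIE).2).1 hI⟩,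
      hIE⟩

end PartialTransversal

section Antichain

variable {τ : Perm α} {B : ι → Set α}

/-- The invariant that lets nested segments be shrunk without ceasing to be segments. -/
def HasEndpointWitnesses (τ : Perm α) (B : ι → Set α) : Prop :=
  ∀ p q, p ≠ q → (B p).Nonempty → B p ⊆ B q → ∃ e ∈ B p, IsEndpoint τ (B q) e

theorem hasEndpointWitnesses_update [DecidableEq ι] {j : ι} {S : Set α}
    (hin : ∀ p, p ≠ j → (B p).Nonempty → B p ⊆ S → ∃ e ∈ B p, IsEndpoint τ S e)
    (hout : S.Nonempty → ∀ q, q ≠ j → S ⊆ B q → ∃ e ∈ S, IsEndpoint τ (B q) e)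
    (hrest : ∀ p q, p ≠ j → q ≠ j → p ≠ q → (B p).Nonempty → B p ⊆ B q →
      ∃ e ∈ B p, IsEndpoint τ (B q) e) :
    HasEndpointWitnesses τ (update B j S) := by
  intro p q hpq
  rcases eq_or_ne q j with rfl | hq
  · simpa only [update_self, update_of_ne hpq] using hin p hpq
  rcases eq_or_ne p j with rfl | hp
  · simpa only [update_self, update_of_ne hq] using fun hne => hout hne q hq
  · simpa only [update_of_ne hp, update_of_ne hq] using hrest p q hp hq hpq

theorem HasEndpointWitnesses.update_sdiff [DecidableEq ι] (hseg : ∀ k, IsOrbitSeg τ (B k))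
    (hW : HasEndpointWitnesses τ B) {q₀ : ι} {e : α} (he : e ∈ B q₀)
    (hend : IsEndpoint τ (B q₀) e) (hmax : ∀ q, q ≠ q₀ → B q₀ ⊆ B q → B q = B q₀) :
    HasEndpointWitnesses τ (update B q₀ (B q₀ \ {e})) := by
  refine hasEndpointWitnesses_update (fun p hp hne hsub => ?_) (fun hne q hq hsub => ?_)
    (fun p q _ _ => hW p q)
  · obtain ⟨e', he', hend'⟩ := hW p q₀ hp hne (hsub.trans sdiff_subset)
    exact ⟨e', he', hend'.anti sdiff_subset⟩
  · by_cases heq : e ∈ B q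
    · have : B q = B q₀ := hmax q hq fun y hy => by
        by_cases hye : y = e
        exacts [hye ▸ heq, hsub ⟨hy, hye⟩]
      rw [this]
      exact (hseg q₀).exists_endpoint_diff he hend hne
    · exact (hseg q₀).exists_endpoint_of_notMem he hne heq

theorem exists_nested_maximal [Finite ι] (h : ∃ p q, p ≠ q ∧ (B p).Nonempty ∧ B p ⊆ B q) :
    ∃ p q, p ≠ q ∧ (B p).Nonempty ∧ B p ⊆ B q ∧ ∀ q', q' ≠ q → B q ⊆ B q' → B q' = B q := by
  obtain ⟨p, q, h⟩ := h
  obtain ⟨⟨p, q⟩, ⟨hpq, hne, hsub⟩, hmax⟩ := Finite.exists_maximalFor (fun pq : ι × ι => B pq.2)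
    {pq | pq.1 ≠ pq.2 ∧ (B pq.1).Nonempty ∧ B pq.1 ⊆ B pq.2} (toFinite _) ⟨(p, q), h⟩
  exact ⟨p, q, hpq, hne, hsub, fun q' hq' hsub' =>
    subset_antisymm (hmax (j := (q, q')) ⟨hq'.symm, hne.mono hsub, hsub'⟩ hsub') hsub'⟩

/-- Witnessed endpoints are deleted one at a time; taking the outer member maximal is what
keeps the invariant. -/
theorem HasEndpointWitnesses.exists_antichain [Finite ι] (hseg : ∀ k, IsOrbitSeg τ (B k))
    (hW : HasEndpointWitnesses τ B) :
    ∃ C : ι → Set α, (∀ k, IsOrbitSeg τ (C k)) ∧ (∀ k, C k ⊆ B k) ∧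
      (∀ I, IsPartialTransversal C I ↔ IsPartialTransversal B I) ∧
      ∀ p q, p ≠ q → (C p).Nonempty → ¬ C p ⊆ C q := by
  classical
  have := Fintype.ofFinite ι
  induction hN : ∑ k, (B k).ncard using Nat.strong_induction_on generalizing B with
  | _ N ih =>
  by_cases hnest : ∃ p q, p ≠ q ∧ (B p).Nonempty ∧ B p ⊆ B q
  · obtain ⟨p₀, q₀, hpq, hne, hsub, hmax⟩ := exists_nested_maximal hnest
    obtain ⟨e, he, hend⟩ := hW p₀ q₀ hpq hne hsub
    have hlt : ∑ k, (update B q₀ (B q₀ \ {e}) k).ncard < N := hN ▸ Finset.sum_lt_sum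
      (fun k _ => ncard_le_ncard (update_sdiff_singleton_subset q₀ e k) (hseg k).finite)
      ⟨q₀, Finset.mem_univ _, by
        simpa using ncard_sdiff_singleton_lt_of_mem (hsub he) (hseg q₀).finite⟩
    have hseg' : ∀ k, IsOrbitSeg τ (update B q₀ (B q₀ \ {e}) k) :=
      (forall_update_iff B (p := fun _ S => IsOrbitSeg τ S)).2
        ⟨(hseg q₀).sdiff_singleton (hsub he) hend, fun k _ => hseg k⟩
    obtain ⟨C, hCseg, hCsub, hCPT, hCanti⟩ :=
      ih _ hlt hseg' (hW.update_sdiff hseg (hsub he) hend hmax) rfl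
    exact ⟨C, hCseg, fun k => (hCsub k).trans (update_sdiff_singleton_subset q₀ e k),
      fun I => (hCPT I).trans (isPartialTransversal_update_sdiff_iff hpq he hsub), hCanti⟩
  · push Not at hnest
    exact ⟨B, hseg, fun _ => subset_rfl, fun _ => Iff.rfl, hnest⟩

theorem exists_antichain_comp [Finite ι] {C : ι → Set α}
    (hC : ∀ p q, p ≠ q → (C p).Nonempty → ¬ C p ⊆ C q) :
    ∃ (r : ℕ) (g : Fin r → ι), (∀ i, (C (g i)).Nonempty) ∧ IsSetAntichain (C ∘ g) ∧
      ∀ I, IsPartialTransversal (C ∘ g) I ↔ IsPartialTransversal C I := by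
  let e := Finite.equivFin {k // (C k).Nonempty}
  have hg : Injective fun i => (e.symm i).1 := fun i j h => e.symm.injective (Subtype.ext h)
  exact ⟨_, fun i => (e.symm i).1, fun i => (e.symm i).2,
    fun i j hij => hC _ _ (hg.ne hij) (e.symm i).2,
    fun I => isPartialTransversal_comp_iff hg fun k hk => ⟨e ⟨k, hk⟩, by simp⟩⟩

end Antichain

section Cyclic

variable {σ : Perm α} {x y f : α} {E S : Set α} {A : ι → Set α}

theorem IsCyclicOn.apply_mem (hcyc : IsCyclicOn σ E) (hy : y ∈ E) : σ y ∈ E := by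
  by_contra h
  exact h (by rw [σ.injective (hcyc.1 _ h)]; exact hy)

theorem IsCyclicOn.orbitSeg_subset (hcyc : IsCyclicOn σ E) (hf : f ∈ E) (n : ℕ) :
    orbitSeg σ f n ⊆ E := by
  rintro _ ⟨t, -, rfl⟩
  induction t with
  | zero => simpa
  | succ t ih => rw [pow_succ', Perm.mul_apply]; exact hcyc.apply_mem ih

theorem IsCyclicOn.sdiff_singleton_subset (hcyc : IsCyclicOn σ E) (hS : IsOrbitSeg σ S)
    (hSE : S ⊆ E) (hx : x ∉ S) (hnext : σ x ∈ S) (hprev : σ⁻¹ x ∈ S) : E \ {x} ⊆ S := by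
  obtain ⟨a, n, rfl⟩ := hS
  obtain rfl : σ x = a := eq_of_mem_orbitSeg_of_inv_notMem hnext (by simpa using hx)
  obtain ⟨t, ht, hta⟩ := hprev
  have hx' : (σ ^ (t + 1)) (σ x) = x := by rw [pow_succ', Perm.mul_apply, hta]; simp
  -- the orbit of `σ x` is `σ x, …, σ ^ t (σ x) = σ⁻¹ x, x`
  have hper : IsPeriodicPt σ (t + 2) (σ x) := by
    rw [IsPeriodicPt, IsFixedPt, ← Perm.coe_pow, pow_succ', Perm.mul_apply, hx']
  rintro y ⟨hyE, hyx⟩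
  obtain ⟨m, rfl⟩ := hcyc.2 _ (hSE hnext) y hyE
  rw [Perm.coe_pow, ← hper.iterate_mod_apply, ← Perm.coe_pow] at hyx ⊢
  have hm : m % (t + 2) < t + 2 := Nat.mod_lt _ (by omega)
  have hm' : m % (t + 2) ≠ t + 1 := fun h => hyx (by rw [h, hx']; rfl)
  exact pow_apply_mem_orbitSeg (by omega)

theorem IsSetAntichain.mem_of_sdiff_subset (hanti : IsSetAntichain A) {p q : ι} (hpq : p ≠ q)
    (hsub : A p \ {x} ⊆ A q \ {x}) : x ∈ A p ∧ x ∉ A q := by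
  by_contra hcon
  refine hanti p q hpq fun y hy => ?_
  by_cases hyx : y = x
  · subst hyx
    by_contra hq
    exact hcon ⟨hy, hq⟩
  · exact (hsub ⟨hy, hyx⟩).1

end Cyclic

section Delete

variable [DecidableEq α] {σ : Perm α} {x y z f : α} {E S : Set α} {A : ι → Set α}

/-- `σ` with `x` cut out of its cycle: `σ⁻¹ x ↦ σ x`, and `x` becomes a fixed point. -/
def skipPerm (σ : Perm α) (x : α) : Perm α := swap x (σ x) * σ

theorem skipPerm_apply_self : skipPerm σ x x = x := by
  simp [skipPerm]

theorem skipPerm_apply_of_ne (hy : y ≠ x) (hσy : σ y ≠ x) : skipPerm σ x y = σ y :=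
  swap_apply_of_ne_of_ne hσy (σ.injective.ne hy)

theorem skipPerm_apply_of_apply_eq (h : σ y = x) : skipPerm σ x y = σ x := by
  simp [skipPerm, h]

theorem skipPerm_apply_eq_of_adjacent (hy : σ y = x) (hz : σ⁻¹ z = x) : skipPerm σ x y = z := by
  rw [skipPerm_apply_of_apply_eq hy, Perm.inv_eq_iff_eq.1 hz]

theorem skipPerm_inv_apply_self : (skipPerm σ x)⁻¹ (σ x) = σ⁻¹ x :=
  Perm.inv_eq_iff_eq.2 (skipPerm_apply_of_apply_eq (σ.apply_symm_apply x)).symm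

theorem exists_orbitSeg_sdiff_eq (hf : f ≠ x) (n : ℕ) :
    ∃ m, orbitSeg σ f n \ {x} = orbitSeg (skipPerm σ x) f m := by
  induction n using Nat.strong_induction_on generalizing f with
  | _ n ih =>
  rcases n with _ | n
  · exact ⟨0, by simp [orbitSeg_zero]⟩
  rw [orbitSeg_succ, insert_sdiff_of_notMem _ (by simpa using hf)]
  by_cases hσf : σ f = x
  · rcases n with _ | n
    · exact ⟨1, by simp [orbitSeg_zero, orbitSeg_succ]⟩
    have hσx : σ x ≠ x := fun h => hf (σ.injective (hσf.trans h.symm))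
    obtain ⟨m, hm⟩ := ih n (by omega) hσx
    refine ⟨m + 1, ?_⟩
    rw [orbitSeg_succ, hσf, insert_sdiff_of_mem _ (mem_singleton x), hm, orbitSeg_succ,
      skipPerm_apply_of_apply_eq hσf]
  · obtain ⟨m, hm⟩ := ih n (by omega) hσf
    exact ⟨m + 1, by rw [hm, orbitSeg_succ, skipPerm_apply_of_ne hf hσf]⟩

theorem IsOrbitSeg.sdiff_skipPerm (hS : IsOrbitSeg σ S) (x : α) :
    IsOrbitSeg (skipPerm σ x) (S \ {x}) := by
  obtain ⟨f, n, rfl⟩ := hS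
  by_cases hf : f = x
  swap
  · obtain ⟨m, hm⟩ := exists_orbitSeg_sdiff_eq hf n
    exact ⟨f, m, hm⟩
  subst hf
  rcases n with _ | n
  · exact ⟨f, 0, by simp [orbitSeg_zero]⟩
  rw [orbitSeg_succ, insert_sdiff_of_mem _ (mem_singleton f)]
  by_cases hσf : σ f = f
  · refine ⟨f, 0, ?_⟩
    rw [orbitSeg_zero, sdiff_eq_empty]
    rintro _ ⟨t, -, rfl⟩
    simp [hσf, Perm.pow_apply_eq_self_of_apply_eq_self hσf]
  · obtain ⟨m, hm⟩ := exists_orbitSeg_sdiff_eq hσf n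
    exact ⟨σ f, m, hm⟩

theorem isCyclicOn_skipPerm (hcyc : IsCyclicOn σ E) (x : α) :
    IsCyclicOn (skipPerm σ x) (E \ {x}) := by
  refine ⟨fun y hy => ?_, fun a ha b hb => ?_⟩
  · rcases eq_or_ne y x with rfl | hyx
    · exact skipPerm_apply_self
    · have hσy : σ y = y := hcyc.1 y fun h => hy ⟨h, hyx⟩
      rw [skipPerm_apply_of_ne hyx (by rwa [hσy]), hσy]
  · obtain ⟨m, rfl⟩ := hcyc.2 a ha.1 b hb.1
    obtain ⟨k, hk⟩ := exists_orbitSeg_sdiff_eq (σ := σ) ha.2 (m + 1)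
    obtain ⟨t, -, ht⟩ : (σ ^ m) a ∈ orbitSeg (skipPerm σ x) a k :=
      hk ▸ ⟨pow_apply_mem_orbitSeg (by omega), hb.2⟩
    exact ⟨t, ht⟩

theorem exists_endpoint_or_mem_of_sdiff_subset (hseg : ∀ k, IsOrbitSeg σ (A k))
    (hanti : IsSetAntichain A) {p q : ι} (hpq : p ≠ q) (hne : (A p \ {x}).Nonempty)
    (hsub : A p \ {x} ⊆ A q \ {x}) :
    (∃ e ∈ A p \ {x}, IsEndpoint (skipPerm σ x) (A q \ {x}) e) ∨ (σ⁻¹ x ∈ A q ∧ σ x ∈ A q) := by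
  obtain ⟨y, hy, hadj | hadj⟩ :=
    (hseg p).exists_adjacent (hanti.mem_of_sdiff_subset hpq hsub).1 hne
  · obtain rfl : y = σ⁻¹ x := Perm.eq_inv_iff_eq.2 hadj
    by_cases hnext : σ x ∈ A q \ {x}
    · exact Or.inr ⟨(hsub hy).1, hnext.1⟩
    · exact Or.inl ⟨_, hy, Or.inl (by rwa [skipPerm_apply_of_apply_eq hadj])⟩
  · obtain rfl : y = σ x := Perm.inv_eq_iff_eq.1 hadj
    by_cases hprev : σ⁻¹ x ∈ A q \ {x}
    · exact Or.inr ⟨hprev.1, (hsub hy).1⟩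
    · refine Or.inl ⟨_, hy, Or.inr ?_⟩
      rwa [skipPerm_inv_apply_self]

/-- The one nesting that can lack a witness is repaired by deleting from its outer member a
neighbor of `x` lying in the inner one. -/
theorem hasEndpointWitnesses_update_of_neighbors_mem [DecidableEq ι] (hcyc : IsCyclicOn σ E)
    (hseg : ∀ k, IsOrbitSeg σ (A k)) (hAE : ∀ k, A k ⊆ E) (hanti : IsSetAntichain A)
    {p₀ q₀ : ι} (hsub : A p₀ \ {x} ⊆ A q₀ \ {x}) (hxq : x ∉ A q₀) (hprev : σ⁻¹ x ∈ A q₀)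
    (hnext : σ x ∈ A q₀) {e₀ : α} (he₀ : e₀ ∈ A p₀ \ {x}) (hadj : σ e₀ = x ∨ σ⁻¹ e₀ = x) :
    HasEndpointWitnesses (skipPerm σ x) (update (A · \ {x}) q₀ ((A q₀ \ {x}) \ {e₀})) := by
  have hfull := hcyc.sdiff_singleton_subset (hseg q₀) (hAE q₀) hxq hnext hprev
  have hxA : ∀ k, k ≠ q₀ → x ∈ A k := fun k hk => by
    by_contra hxk
    exact hanti k q₀ hk fun y hy => hfull ⟨hAE k hy, fun h => hxk (mem_singleton_iff.1 h ▸ hy)⟩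
  refine hasEndpointWitnesses_update (fun p hp hne hpsub => ?_) (fun hne q hq hqsub => ?_)
    (fun p q _ hq hpq hne hpqsub => absurd (hxA q hq) (hanti.mem_of_sdiff_subset hpq hpqsub).2)
  · -- the inner member holds the neighbor of `x` other than `e₀`, which is adjacent to `e₀`
    obtain ⟨y, hy, hyadj⟩ := (hseg p).exists_adjacent (hxA p hp) hne
    have hye : y ≠ e₀ := fun h => (hpsub hy).2 h
    refine ⟨y, hy, ?_⟩
    rcases hyadj with hy' | hy' <;> rcases hadj with he' | he'
    · exact absurd (σ.injective (hy'.trans he'.symm)) hye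
    · exact Or.inl (by simp [skipPerm_apply_eq_of_adjacent hy' he'])
    · exact Or.inr (by simp [Perm.inv_eq_iff_eq.2 (skipPerm_apply_eq_of_adjacent he' hy').symm])
    · exact absurd (σ⁻¹.injective (hy'.trans he'.symm)) hye
  · have he₀q : e₀ ∉ A q \ {x} := fun he => hanti q₀ q (Ne.symm hq) fun y hy => by
      by_cases hye : y = e₀
      · exact hye ▸ he.1
      · exact (hqsub ⟨⟨hy, fun h => hxq (mem_singleton_iff.1 h ▸ hy)⟩, hye⟩).1
    exact ((hseg q₀).sdiff_skipPerm x).exists_endpoint_of_notMem (hsub he₀) hne he₀q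

theorem exists_hasEndpointWitnesses_sdiff (hcyc : IsCyclicOn σ E)
    (hseg : ∀ k, IsOrbitSeg σ (A k)) (hAE : ∀ k, A k ⊆ E) (hanti : IsSetAntichain A) (x : α) :
    ∃ B : ι → Set α, (∀ k, IsOrbitSeg (skipPerm σ x) (B k)) ∧ (∀ k, B k ⊆ A k \ {x}) ∧
      (∀ I, IsPartialTransversal B I ↔ IsPartialTransversal (A · \ {x}) I) ∧
      HasEndpointWitnesses (skipPerm σ x) B := by
  classical
  by_cases hW : HasEndpointWitnesses (skipPerm σ x) (A · \ {x})
  · exact ⟨_, fun k => (hseg k).sdiff_skipPerm x, fun _ => subset_rfl, fun _ => Iff.rfl, hW⟩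
  unfold HasEndpointWitnesses at hW
  push Not at hW
  obtain ⟨p₀, q₀, hpq, hne, hsub, hno⟩ := hW
  obtain ⟨hxp, hxq⟩ := hanti.mem_of_sdiff_subset hpq hsub
  obtain ⟨hprev, hnext⟩ :=
    (exists_endpoint_or_mem_of_sdiff_subset hseg hanti hpq hne hsub).resolve_left
      fun ⟨e, he, hend⟩ => hno e he hend
  obtain ⟨e₀, he₀, hadj⟩ := (hseg p₀).exists_adjacent hxp hne
  have hend₀ : IsEndpoint σ (A q₀) e₀ := hadj.imp (fun h => by rwa [h]) (fun h => by rwa [h])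
  refine ⟨_, (forall_update_iff _ (p := fun _ S => IsOrbitSeg (skipPerm σ x) S)).2 ⟨?_,
      fun k _ => (hseg k).sdiff_skipPerm x⟩, update_sdiff_singleton_subset q₀ e₀,
    fun I => isPartialTransversal_update_sdiff_iff hpq he₀ hsub,
    hasEndpointWitnesses_update_of_neighbors_mem hcyc hseg hAE hanti hsub hxq hprev hnext he₀ hadj⟩
  rw [Set.sdiff_sdiff_comm]
  exact ((hseg q₀).sdiff_singleton (hsub he₀).1 hend₀).sdiff_skipPerm x

end Delete

theorem IsCycInterval.eq_orbitSeg {σ : Perm α} {f l : α} {S : Set α}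
    (h : IsCycInterval σ f l S) : ∃ n, S = orbitSeg σ f (n + 1) :=
  let ⟨n, _, hS⟩ := h
  ⟨n, hS.trans setOf_exists_le_eq_orbitSeg⟩

theorem isCycInterval_orbitSeg (τ : Perm α) (a : α) (n : ℕ) :
    IsCycInterval τ a ((τ ^ n) a) (orbitSeg τ a (n + 1)) :=
  ⟨n, rfl, setOf_exists_le_eq_orbitSeg.symm⟩

theorem stmt_3_general {α : Type*} (M : Matroid α) (h : IsMultiPath M)
    (x : α) : IsMultiPath (mDelete M {x}) := by
  classical
  obtain ⟨σ, r, f, l, A, hcyc, hf, hint, hanti, hpres⟩ := h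
  choose n hA using fun k => (hint k).eq_orbitSeg
  have hseg : ∀ k, IsOrbitSeg σ (A k) := fun k => ⟨f k, n k + 1, hA k⟩
  have hAE : ∀ k, A k ⊆ M.E := fun k => hA k ▸ hcyc.orbitSeg_subset (hf k) _
  obtain ⟨B, hBseg, hBsub, hBPT, hBW⟩ := exists_hasEndpointWitnesses_sdiff hcyc hseg hAE hanti x
  obtain ⟨C, hCseg, hCsub, hCPT, hCnest⟩ := hBW.exists_antichain hBseg
  obtain ⟨r', g, hgne, hganti, hgPT⟩ := exists_antichain_comp hCnest
  choose a m hCg using fun i => (hCseg (g i)).exists_eq_succ (hgne i)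
  have hCE : ∀ i, C (g i) ⊆ M.E \ {x} :=
    fun i => (hCsub _).trans ((hBsub _).trans (sdiff_subset_sdiff_left (hAE _)))
  refine ⟨skipPerm σ x, r', a, fun i => (skipPerm σ x ^ m i) (a i), C ∘ g,
    isCyclicOn_skipPerm hcyc x, fun i => hCE i (hCg i ▸ mem_orbitSeg_succ_self),
    fun i => by rw [comp_apply, hCg i]; exact isCycInterval_orbitSeg _ _ _, hganti, ?_⟩
  exact (hpres.delete x).congr fun I => ((hgPT I).trans ((hCPT I).trans (hBPT I))).symm

/-- The class of multi-path matroids is closed under deletion. -/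
theorem stmt_3 {α : Type*} [Fintype α] (M : Matroid α) (h : IsMultiPath M)
    (x : α) (hx : x ∈ M.E) : IsMultiPath (mDelete M {x}) :=
  stmt_3_general M h x
end

section
/- Let B be a basis of the multi-path matroid M[ℐ] with valid representation Π(B, p_i) in the diagram D(ℐ, 1), with respect to the linear order 1 < 2 < ⋯ < m+r. An element u ∈ B is internally active with respect to B if and only if either (a) {1, 2, …, u} ⊆ B, or (b) the u-th step of Π(B, p_i) lies in the top border Q and the subpath consisting of steps u+1 through m+r touches the bottom border P. -/
open Set Matroid

variable {α ι : Type*}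

/-!
Lift each interval `A j` of `ℤ/(m+r)` to an interval `[a j, b j]` of `ℕ` with `a j < m + r`.
Then `Q` is the set of starting points `a j`, `P` the set of end points `b j mod (m+r)`, and the
`k - 1` intervals containing `0` but not starting there are those that wrap (`m + r ≤ b j`).
Since a basis `X` picks one element from each interval, `P t + X t' ≤ (k - 1) + Q t' + X t`
for all `t, t'` (writing `Y t` for the height of `Y` after `t` steps). Conversely, a set whose path
runs between the borders from some `p_i` can be matched to the intervals sorted by their starting
points, shifted cyclically; so such a set is a basis.

The rest is lattice-path combinatorics. Under (b), exchanging `u` for some `v < u` would lift the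
path by one at step `u` while leaving it unchanged at the touching point after `u`, contradicting
the inequality. If neither (a) nor (b) holds, `u` can be exchanged for the last missing element
before `u` if the path is strictly below `Q` at step `u`. Otherwise the path is on `Q` and
never touches `P` afterwards, and `u` can be exchanged for the first missing element, with the
starting point moved to `p_(i-1)`.
-/

open scoped Finset

section PathHeight

variable {n : ℕ}

lemma pathHt_zero (w : Set (Fin n)) : pathHt w 0 = 0 := by
  simp [pathHt]

lemma pathHt_succ (w : Set (Fin n)) (t : ℕ) :
    pathHt w (t + 1) = pathHt w t + (w ∩ {j | (j : ℕ) = t}).ncard := by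
  rw [pathHt, pathHt, ← Set.ncard_union_eq]
  · congr 1
    ext j
    simp only [Set.mem_inter_iff, Set.mem_union, Set.mem_ofPred_eq, Nat.lt_succ_iff_lt_or_eq]
    tauto
  · exact Set.disjoint_left.2 fun j hj hj' => (Nat.ne_of_lt hj.2) hj'.2

lemma pathHt_succ_le (w : Set (Fin n)) (t : ℕ) : pathHt w (t + 1) ≤ pathHt w t + 1 := by
  rw [pathHt_succ]
  exact Nat.add_le_add_left ((Set.ncard_le_one (Set.toFinite _)).2
    fun _ hx _ hy => Fin.ext (hx.2.trans hy.2.symm)) _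

lemma pathHt_succ_of_mem {w : Set (Fin n)} {j : Fin n} (hj : j ∈ w) :
    pathHt w (j + 1) = pathHt w j + 1 := by
  rw [pathHt_succ, ← Set.ncard_singleton j]
  congr 2
  ext x
  simp only [Set.mem_inter_iff, Set.mem_ofPred_eq, Set.mem_singleton_iff, Fin.val_inj]
  exact ⟨And.right, fun hx => ⟨hx ▸ hj, hx⟩⟩

lemma pathHt_le_add (w : Set (Fin n)) {t t' : ℕ} (h : t ≤ t') :
    pathHt w t' ≤ pathHt w t + (t' - t) := by
  induction t', h using Nat.le_induction with
  | base => simp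
  | succ t' h ih => have := pathHt_succ_le w t'; omega

lemma pathHt_le_self (w : Set (Fin n)) (t : ℕ) : pathHt w t ≤ t := by
  simpa [pathHt_zero] using pathHt_le_add w (Nat.zero_le t)

lemma pathHt_add_le {w : Set (Fin n)} {t t' : ℕ} (h : t ≤ t') (ht' : t' ≤ n)
    (hw : ∀ j : Fin n, t ≤ j → (j : ℕ) < t' → j ∈ w) :
    pathHt w t + (t' - t) ≤ pathHt w t' := by
  induction t', h using Nat.le_induction with
  | base => simp
  | succ t' h ih =>
    have hmem := hw ⟨t', by omega⟩ h (Nat.lt_succ_self t')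
    have := pathHt_succ_of_mem hmem
    have := ih (by omega) fun j hj hj' => hw j hj (by omega)
    simp only at *
    omega

lemma pathHt_eq_ncard (w : Set (Fin n)) : pathHt w n = w.ncard := by
  rw [pathHt, Set.inter_eq_self_of_subset_left fun j _ => j.isLt]

lemma pathHt_insert {w : Set (Fin n)} {v : Fin n} (hv : v ∉ w) (t : ℕ) :
    pathHt (insert v w) t = pathHt w t + if (v : ℕ) < t then 1 else 0 := by
  unfold pathHt
  split_ifs with h
  · rw [Set.insert_inter_of_mem (show v ∈ {j : Fin n | (j : ℕ) < t} from h),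
      Set.ncard_insert_of_notMem fun h' => hv h'.1]
  · rw [Set.insert_inter_of_notMem (show v ∉ {j : Fin n | (j : ℕ) < t} from h), Nat.add_zero]

lemma pathHt_exchange {w : Set (Fin n)} {u v : Fin n} (hu : u ∈ w) (hv : v ∉ w) (t : ℕ) :
    pathHt (insert v (w \ {u})) t + (if (u : ℕ) < t then 1 else 0)
      = pathHt w t + if (v : ℕ) < t then 1 else 0 := by
  have hw := pathHt_insert (w := w \ {u}) (v := u) (fun h => h.2 rfl) t
  rw [Set.insert_sdiff_singleton, Set.insert_eq_of_mem hu] at hw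
  rw [pathHt_insert (fun h => hv h.1), hw]
  omega

lemma pathHt_range {r : ℕ} {g : Fin r → Fin n} (hg : Function.Injective g) (t : ℕ) :
    pathHt (Set.range g) t = #{j | (g j : ℕ) < t} := by
  rw [pathHt, ← Set.image_preimage_eq_range_inter, Set.ncard_image_of_injective _ hg,
    ← Set.ncard_coe_finset]
  congr 1
  ext j
  simp

lemma pathHt_singleton (v : Fin n) (t : ℕ) : pathHt {v} t = if (v : ℕ) < t then 1 else 0 := by
  simpa [pathHt] using pathHt_insert (Set.notMem_empty v) t

end PathHeight

lemma not_exists_isBase_exchange_of_touch {n k i : ℕ} {M : Matroid (Fin n)}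
    {P Q B : Set (Fin n)} {u : Fin n}
    (hcount : ∀ X, M.IsBase X → ∀ t t',
      pathHt P t + pathHt X t' ≤ k - 1 + pathHt Q t' + pathHt X t)
    (hu : u ∈ B) (htop : i - 1 + pathHt B u = k - 1 + pathHt Q u) {t : ℕ}
    (ht : (u : ℕ) + 1 ≤ t) (htouch : pathHt P t = i - 1 + pathHt B t) :
    ¬ ∃ v ∉ B, v < u ∧ M.IsBase (insert v (B \ {u})) := by
  rintro ⟨v, hvB, hvu, hX⟩
  have hvu' : (v : ℕ) < u := hvu
  have hcount := hcount _ hX t u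
  have hex := pathHt_exchange hu hvB t
  have hex' := pathHt_exchange hu hvB u
  rw [if_pos (by omega), if_pos (by omega)] at hex
  rw [if_neg (lt_irrefl _), if_pos hvu'] at hex'
  omega

section Exchange

variable {m r k i : ℕ} {P Q B : Set (Fin (m + r))} {u : Fin (m + r)}

lemma exists_lt_notMem_of_not_subset (hu : u ∈ B) (hna : ¬ {e | e ≤ u} ⊆ B) :
    ∃ v ∉ B, v < u := by
  obtain ⟨e, he, heB⟩ := Set.not_subset.1 hna
  exact ⟨e, heB, lt_of_le_of_ne he fun h => heB (h ▸ hu)⟩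

lemma exists_isBPath_exchange_of_lt_top (hB : IsBPath k m r P Q i B) (hu : u ∈ B)
    (hna : ¬ {e | e ≤ u} ⊆ B) (hlt : i - 1 + pathHt B u < k - 1 + pathHt Q u) :
    ∃ v ∉ B, v < u ∧ IsBPath k m r P Q i (insert v (B \ {u})) := by
  obtain ⟨hi1, hik, hBr, hbd⟩ := hB
  obtain ⟨v, ⟨hvB, hvu⟩, hmax⟩ := Set.exists_max_image {w | w ∉ B ∧ w < u}
    (fun w => (w : ℕ)) (Set.toFinite _) (exists_lt_notMem_of_not_subset hu hna)
  have hgap : ∀ j : Fin (m + r), (v : ℕ) < j → (j : ℕ) < u → j ∈ B := fun j hvj hju =>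
    not_not.1 fun hjB => absurd (hmax j ⟨hjB, hju⟩) (not_le.2 hvj)
  have hvu' : (v : ℕ) < u := hvu
  have hex := pathHt_exchange hu hvB
  refine ⟨v, hvB, hvu, hi1, hik, ?_, fun t ht => ⟨?_, ?_⟩⟩
  · have := hex (m + r)
    rw [if_pos u.isLt, if_pos v.isLt] at this
    omega
  · have := hex t
    have := (hbd t ht).1
    split_ifs at * <;> omega
  · have hex := hex t
    have := (hbd t ht).2
    by_cases hvt : (v : ℕ) < t ∧ t ≤ u
    · -- between `v` and `u` the path `B` only goes North, so it stays strictly below `Q`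
      have := pathHt_add_le (w := B) hvt.2 u.isLt.le fun j hj hj' => hgap j (by omega) hj'
      have := pathHt_le_add Q hvt.2
      split_ifs at hex <;> omega
    · split_ifs at hex <;> omega

lemma exists_isBPath_exchange_of_no_touch (hPr : pathHt P (m + r) = r)
    (hB : IsBPath k m r P Q i B) (hu : u ∈ B) (hna : ¬ {e | e ≤ u} ⊆ B)
    (hnt : ∀ t, (u : ℕ) + 1 ≤ t → t ≤ m + r → pathHt P t ≠ i - 1 + pathHt B t) :
    ∃ v ∉ B, v < u ∧ IsBPath k m r P Q (i - 1) (insert v (B \ {u})) := by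
  obtain ⟨hi1, hik, hBr, hbd⟩ := hB
  have hi2 : 2 ≤ i := by
    have := hnt (m + r) (by omega) le_rfl
    omega
  obtain ⟨e, heB, heu⟩ := exists_lt_notMem_of_not_subset hu hna
  obtain ⟨v, hvB, hmin⟩ :=
    Set.exists_min_image Bᶜ (fun w => (w : ℕ)) (Set.toFinite _) ⟨e, heB⟩
  have hvu : v < u := lt_of_le_of_lt (hmin e heB) heu
  have hvu' : (v : ℕ) < u := hvu
  have hex := pathHt_exchange hu hvB
  refine ⟨v, hvB, hvu, by omega, by omega, ?_, fun t ht => ⟨?_, ?_⟩⟩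
  · have := hex (m + r)
    rw [if_pos u.isLt, if_pos v.isLt] at this
    omega
  · have hex := hex t
    have := (hbd t ht).1
    by_cases htv : t ≤ v
    · -- before `v` the path `B` only goes North, so it lies above `P`
      have := pathHt_add_le (w := B) (Nat.zero_le t) (by omega) fun j _ hj =>
        not_not.1 fun hjB => absurd (hmin j hjB) (by omega)
      have := pathHt_le_self P t
      split_ifs at hex <;> omega
    · by_cases hut : (u : ℕ) < t
      · have := hnt t hut ht
        split_ifs at hex <;> omega
      · split_ifs at hex <;> omega
  · have := hex t
    have := (hbd t ht).2
    split_ifs at * <;> omega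

lemma exists_isBPath_exchange (hPr : pathHt P (m + r) = r)
    (hB : IsBPath k m r P Q i B) (hu : u ∈ B) (hna : ¬ {e | e ≤ u} ⊆ B)
    (hnb : ¬ ((i - 1 + pathHt B u = k - 1 + pathHt Q u ∧
        i - 1 + pathHt B (u + 1) = k - 1 + pathHt Q (u + 1)) ∧
      ∃ t, (u : ℕ) + 1 ≤ t ∧ t ≤ m + r ∧ pathHt P t = i - 1 + pathHt B t)) :
    ∃ v ∉ B, v < u ∧ ∃ i', IsBPath k m r P Q i' (insert v (B \ {u})) := by
  by_cases hlt : i - 1 + pathHt B u < k - 1 + pathHt Q u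
  · obtain ⟨v, hvB, hvu, hX⟩ := exists_isBPath_exchange_of_lt_top hB hu hna hlt
    exact ⟨v, hvB, hvu, i, hX⟩
  · have hbd := hB.2.2.2
    have htop : i - 1 + pathHt B u = k - 1 + pathHt Q u := by
      have := (hbd u u.isLt.le).2
      omega
    have htop' : i - 1 + pathHt B (u + 1) = k - 1 + pathHt Q (u + 1) := by
      have := (hbd (u + 1) u.isLt).2
      have := pathHt_succ_of_mem hu
      have := pathHt_succ_le Q u
      omega
    obtain ⟨v, hvB, hvu, hX⟩ := exists_isBPath_exchange_of_no_touch hPr hB hu hna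
      fun t ht ht' htouch => hnb ⟨⟨htop, htop'⟩, t, ht, ht', htouch⟩
    exact ⟨v, hvB, hvu, i - 1, hX⟩

theorem not_exists_isBase_exchange_iff {M : Matroid (Fin (m + r))}
    (hcount : ∀ X, M.IsBase X → ∀ t t',
      pathHt P t + pathHt X t' ≤ k - 1 + pathHt Q t' + pathHt X t)
    (hindep : ∀ X i', IsBPath k m r P Q i' X → M.Indep X)
    (hPr : pathHt P (m + r) = r) (hB : M.IsBase B) (hvalid : IsBPath k m r P Q i B)
    (hu : u ∈ B) :
    (¬ ∃ v, v ∉ B ∧ v < u ∧ M.IsBase ((B \ {u}) ∪ {v})) ↔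
      ({e | e ≤ u} ⊆ B) ∨
      ((i - 1 + pathHt B u = k - 1 + pathHt Q u ∧
        i - 1 + pathHt B (u + 1) = k - 1 + pathHt Q (u + 1)) ∧
       ∃ t, (u : ℕ) + 1 ≤ t ∧ t ≤ m + r ∧ pathHt P t = i - 1 + pathHt B t) := by
  simp only [Set.union_singleton]
  constructor
  · intro hinactive
    by_contra hc
    obtain ⟨hna, hnb⟩ := not_or.1 hc
    obtain ⟨v, hvB, hvu, i', hX⟩ := exists_isBPath_exchange hPr hvalid hu hna hnb
    exact hinactive ⟨v, hvB, hvu, hB.exchange_isBase_of_indep hvB (hindep _ i' hX)⟩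
  · rintro (ha | ⟨⟨htop, -⟩, t, ht, -, htouch⟩)
    · rintro ⟨v, hvB, hvu, -⟩
      exact hvB (ha hvu.le)
    · exact not_exists_isBase_exchange_of_touch hcount hu htop ht htouch

end Exchange

lemma Nat.mod_eq_ite_of_lt_two_mul {b n : ℕ} (hb : b < 2 * n) :
    b % n = if n ≤ b then b - n else b := by
  split_ifs with h
  · rw [Nat.mod_eq_sub_mod h, Nat.mod_eq_of_lt (by omega)]
  · exact Nat.mod_eq_of_lt (by omega)

lemma Finset.card_filter_comp_perm {ι : Type*} [Fintype ι] (e : Equiv.Perm ι) (p : ι → Prop)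
    [DecidablePred p] : #{j | p (e j)} = #{j | p j} := by
  simp only [Finset.card_filter]
  exact Equiv.sum_comp e fun j => if p j then 1 else 0

lemma StrictMono.lt_card_filter_lt_iff {r : ℕ} {g : Fin r → ℕ} (hg : StrictMono g) (s : Fin r)
    (t : ℕ) : (s : ℕ) < #{j | g j < t} ↔ g s < t := by
  constructor
  · intro hs
    by_contra! hts
    have : #{j | g j < t} ≤ #(Finset.Iio s) := Finset.card_le_card fun j hj => by
      simp only [Finset.mem_filter, Finset.mem_univ, true_and] at hj
      exact Finset.mem_Iio.2 (hg.lt_iff_lt.1 (lt_of_lt_of_le hj hts))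
    rw [Fin.card_Iio] at this
    omega
  · intro hst
    have : #(Finset.Iic s) ≤ #{j | g j < t} := Finset.card_le_card fun j hj =>
      Finset.mem_filter.2
        ⟨Finset.mem_univ j, lt_of_le_of_lt (hg.monotone (Finset.mem_Iic.1 hj)) hst⟩
    rw [Fin.card_Iic] at this
    omega

lemma Fin.iff_sub_card_le_of_monotone {r : ℕ} {p : Fin r → Prop} [DecidablePred p]
    (hp : Monotone p) (s : Fin r) : p s ↔ r - #{q | p q} ≤ s := by
  constructor
  · intro hs
    have : #(Finset.Ici s) ≤ #{q | p q} := Finset.card_le_card fun q hq =>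
      Finset.mem_filter.2 ⟨Finset.mem_univ q, hp (Finset.mem_Ici.1 hq) hs⟩
    rw [Fin.card_Ici] at this
    omega
  · intro hs
    by_contra hns
    have : #{q | p q} ≤ #(Finset.Ioi s) := Finset.card_le_card fun q hq => by
      simp only [Finset.mem_filter, Finset.mem_univ, true_and] at hq
      exact Finset.mem_Ioi.2 (lt_of_not_ge fun hqs => hns (hp hqs hq))
    rw [Fin.card_Ioi] at this
    omega

/-- Membership of `x < n` in the cyclic interval of `ℤ/n` from `a < n` to `b`; the interval
wraps around `0` when `n ≤ b`. -/
def InCycIcc (n a b x : ℕ) : Prop := a ≤ x ∧ x ≤ b ∨ a ≤ x + n ∧ x + n ≤ b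

lemma card_end_mod_lt_add_card_lt_le {n r : ℕ} {a b x : Fin r → ℕ} (hb : ∀ j, b j < 2 * n)
    (hx : ∀ j, InCycIcc n (a j) (b j) (x j)) (t t' : ℕ) :
    #{j | b j % n < t} + #{j | x j < t'} ≤
      #{j | n ≤ b j} + #{j | a j < t'} + #{j | x j < t} := by
  simp only [Finset.card_filter, ← Finset.sum_add_distrib]
  refine Finset.sum_le_sum fun j _ => ?_
  have := hx j
  rw [Nat.mod_eq_ite_of_lt_two_mul (hb j)]
  unfold InCycIcc at this
  split_ifs <;> omega

/-- Lifts `[a j, b j] ⊆ ℕ` of proper cyclic intervals of `ℤ/n`, none containing another. -/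
structure IsCycIccAntichain (n : ℕ) {r : ℕ} (a b : Fin r → ℕ) : Prop where
  start_lt : ∀ j, a j < n
  end_lt : ∀ j, b j < a j + n
  end_lt_end : ∀ j j', j ≠ j' → a j ≤ a j' → b j < b j'
  end_sub_lt : ∀ j j', n ≤ b j → b j' < n → b j - n < b j'

namespace IsCycIccAntichain

variable {n r : ℕ} {a b : Fin r → ℕ}

lemma end_lt_two_mul (h : IsCycIccAntichain n a b) (j : Fin r) : b j < 2 * n := by
  have := h.start_lt j
  have := h.end_lt j
  omega

lemma injective_start (h : IsCycIccAntichain n a b) : Function.Injective a := by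
  intro j j' hjj'
  by_contra hne
  have := h.end_lt_end j j' hne hjj'.le
  have := h.end_lt_end j' j (Ne.symm hne) hjj'.ge
  omega

lemma end_le_end (h : IsCycIccAntichain n a b) {j j' : Fin r} (hjj' : a j ≤ a j') :
    b j ≤ b j' := by
  rcases eq_or_ne j j' with rfl | hne
  · exact le_rfl
  · exact (h.end_lt_end j j' hne hjj').le

lemma injective_end_mod (h : IsCycIccAntichain n a b) :
    Function.Injective fun j => b j % n := by
  intro j j' hjj'
  by_contra hne
  simp only [Nat.mod_eq_ite_of_lt_two_mul (h.end_lt_two_mul _)] at hjj'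
  have := h.end_sub_lt j j'
  have := h.end_sub_lt j' j
  rcases le_total (a j) (a j') with hle | hle
  · have := h.end_lt_end j j' hne hle
    split_ifs at hjj' <;> omega
  · have := h.end_lt_end j' j (Ne.symm hne) hle
    split_ifs at hjj' <;> omega

lemma strictMono_start_sort (h : IsCycIccAntichain n a b) : StrictMono (a ∘ Tuple.sort a) :=
  (Tuple.monotone_sort a).strictMono_of_injective (h.injective_start.comp (Tuple.sort a).injective)

lemma monotone_end_sort (h : IsCycIccAntichain n a b) : Monotone (b ∘ Tuple.sort a) :=
  fun _ _ hqq' => h.end_le_end (Tuple.monotone_sort a hqq')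

lemma wraps_sort_iff (h : IsCycIccAntichain n a b) (q : Fin r) :
    n ≤ b (Tuple.sort a q) ↔ r - #{j | n ≤ b j} ≤ q := by
  rw [← Finset.card_filter_comp_perm (Tuple.sort a)]
  refine Fin.iff_sub_card_le_of_monotone (p := fun q => n ≤ b (Tuple.sort a q))
    (fun q q' hqq' hq => ?_) q
  by_contra hq'
  rcases hqq'.lt_or_eq with hlt | rfl
  · have := h.end_lt_end _ _ ((Tuple.sort a).injective.ne hlt.ne)
      (h.strictMono_start_sort hlt).le
    omega
  · exact hq' hq

lemma sub_le_card_end_mod_lt_of_wraps (h : IsCycIccAntichain n a b) {q : Fin r}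
    (hq : n ≤ b (Tuple.sort a q)) :
    q + 1 - (r - #{j | n ≤ b j}) ≤ #{j | b j % n < b (Tuple.sort a q) - n + 1} := by
  have hcq := (h.wraps_sort_iff q).1 hq
  let c : Fin r := ⟨r - #{j | n ≤ b j}, lt_of_le_of_lt hcq q.isLt⟩
  calc q + 1 - (r - #{j | n ≤ b j}) = #((Finset.Icc c q).image (Tuple.sort a)) := by
        rw [Finset.card_image_of_injective _ (Tuple.sort a).injective, Fin.card_Icc]
    _ ≤ _ := Finset.card_le_card fun j hj => by
        obtain ⟨q', hq', rfl⟩ := Finset.mem_image.1 hj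
        have hc := (Finset.mem_Icc.1 hq').1
        have hwq' := (h.wraps_sort_iff q').2 hc
        have := h.monotone_end_sort (Finset.mem_Icc.1 hq').2
        simp only [Function.comp_apply] at this
        simp only [Finset.mem_filter, Finset.mem_univ, true_and,
          Nat.mod_eq_ite_of_lt_two_mul (h.end_lt_two_mul _)]
        rw [if_pos hwq']
        omega

lemma add_card_wraps_le_card_end_mod_lt_of_not_wraps (h : IsCycIccAntichain n a b) {q : Fin r}
    (hq : b (Tuple.sort a q) < n) :
    q + 1 + #{j | n ≤ b j} ≤ #{j | b j % n < b (Tuple.sort a q) + 1} := by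
  have hle : ∀ q' ≤ q, b (Tuple.sort a q') ≤ b (Tuple.sort a q) := fun q' hq' =>
    h.monotone_end_sort hq'
  calc q + 1 + #{j | n ≤ b j}
      = #((Finset.Iic q).image (Tuple.sort a) ∪ Finset.univ.filter fun j => n ≤ b j) := by
        rw [Finset.card_union_of_disjoint,
          Finset.card_image_of_injective _ (Tuple.sort a).injective, Fin.card_Iic]
        refine Finset.disjoint_left.2 fun j hj hj' => ?_
        obtain ⟨q', hq', rfl⟩ := Finset.mem_image.1 hj
        have := hle q' (Finset.mem_Iic.1 hq')
        simp only [Finset.mem_filter, Finset.mem_univ, true_and] at hj'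
        omega
    _ ≤ _ := Finset.card_le_card fun j hj => by
        simp only [Finset.mem_filter, Finset.mem_univ, true_and,
          Nat.mod_eq_ite_of_lt_two_mul (h.end_lt_two_mul _)]
        rcases Finset.mem_union.1 hj with hj | hj
        · obtain ⟨q', hq', rfl⟩ := Finset.mem_image.1 hj
          have := hle q' (Finset.mem_Iic.1 hq')
          rw [if_neg (by omega)]
          omega
        · simp only [Finset.mem_filter, Finset.mem_univ, true_and] at hj
          have := h.end_sub_lt j _ hj hq
          rw [if_pos hj]
          omega

lemma start_sort_le (h : IsCycIccAntichain n a b) {x : Fin r → ℕ} (hx : StrictMono x)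
    {w i' : ℕ} {s q : Fin r} (hupp : i' + #{s' | x s' < x s + 1} ≤ w + #{j | a j < x s + 1})
    (hq : (q : ℕ) + w = s + i') : a (Tuple.sort a q) ≤ x s := by
  have := (hx.lt_card_filter_lt_iff s (x s + 1)).2 (Nat.lt_add_one _)
  have := Finset.card_filter_comp_perm (Tuple.sort a) fun j => a j < x s + 1
  exact Nat.lt_add_one_iff.1 ((h.strictMono_start_sort.lt_card_filter_lt_iff q _).1 (by
    simp only [Function.comp_apply]; omega))

/-- The matching sends `x s` to the interval with the `(s - (w - i'))`-th starting point,
indices taken mod `r`, where `w` is the number of wrapping intervals. -/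
theorem exists_injective_inCycIcc (h : IsCycIccAntichain n a b) {x : Fin r → ℕ}
    (hx : StrictMono x) (hxn : ∀ s, x s < n) {i' : ℕ} (hi' : i' ≤ #{j | n ≤ b j})
    (hlow : ∀ t ≤ n, #{j | b j % n < t} ≤ i' + #{s | x s < t})
    (hupp : ∀ t ≤ n, i' + #{s | x s < t} ≤ #{j | n ≤ b j} + #{j | a j < t}) :
    ∃ ψ : Fin r → Fin r, Function.Injective ψ ∧
      ∀ s, InCycIcc n (a (ψ s)) (b (ψ s)) (x s) := by
  set e := Tuple.sort a
  set w := #{j | n ≤ b j}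
  have hwr : w ≤ r := (Finset.card_filter_le _ _).trans_eq (Finset.card_fin r)
  have hle_end : ∀ (s : Fin r) j,
      (s : ℕ) + i' + 1 ≤ #{j' | b j' % n < b j % n + 1} → x s ≤ b j % n := fun s j hj => by
      have := hlow (b j % n + 1) (Nat.mod_lt _ (by have := hxn s; omega))
      exact Nat.lt_add_one_iff.1 ((hx.lt_card_filter_lt_iff s _).1 (by omega))
  let q : Fin r → Fin r := fun s =>
    ⟨if w - i' ≤ s then s - (w - i') else s + r - (w - i'), by split_ifs <;> omega⟩
  refine ⟨e ∘ q, e.injective.comp fun s s' hss' => ?_, fun s => ?_⟩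
  · simp only [q, Fin.mk.injEq] at hss'
    exact Fin.ext (by split_ifs at hss' <;> omega)
  · show InCycIcc n (a (e (q s))) (b (e (q s))) (x s)
    have hend := h.end_lt_two_mul (e (q s))
    have hxs := hxn s
    by_cases hs : w - i' ≤ (s : ℕ)
    · have hqs : (q s : ℕ) + w = s + i' := by simp only [q, if_pos hs]; omega
      refine Or.inl ⟨h.start_sort_le hx (hupp (x s + 1) (hxn s)) hqs, ?_⟩
      by_cases hws : n ≤ b (e (q s))
      · omega
      · have hrank : (q s : ℕ) + 1 + w ≤ #{j | b j % n < b (e (q s)) + 1} :=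
          h.add_card_wraps_le_card_end_mod_lt_of_not_wraps (not_le.1 hws)
        have hmod : b (e (q s)) % n = b (e (q s)) := Nat.mod_eq_of_lt (not_le.1 hws)
        simpa [hmod] using hle_end s (e (q s)) (by rw [hmod]; omega)
    · have hqs : (q s : ℕ) + (w - i') = s + r := by simp only [q, if_neg hs]; omega
      have hws : n ≤ b (e (q s)) := (h.wraps_sort_iff _).2 (by omega)
      have hrank : (q s : ℕ) + 1 - (r - w) ≤ #{j | b j % n < b (e (q s)) - n + 1} :=
        h.sub_le_card_end_mod_lt_of_wraps hws
      have hmod : b (e (q s)) % n = b (e (q s)) - n := by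
        rw [Nat.mod_eq_ite_of_lt_two_mul hend, if_pos hws]
      have := hle_end s (e (q s)) (by rw [hmod]; omega)
      have := h.start_lt (e (q s))
      exact Or.inr ⟨by omega, by omega⟩

end IsCycIccAntichain

section FinRotate

variable {n : ℕ}

lemma val_finRotate_pow_apply (t : ℕ) (x : Fin n) :
    ((finRotate n ^ t) x : ℕ) = (x + t) % n := by
  induction t with
  | zero => simp [Nat.mod_eq_of_lt x.isLt]
  | succ t ih =>
    rw [pow_succ', Equiv.Perm.mul_apply, finRotate_apply, Fin.val_add, ih, Fin.val_one',
      ← Nat.add_mod, ← Nat.add_assoc]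

lemma IsCycInterval.exists_inCycIcc {f l : Fin n} {I : Set (Fin n)}
    (hI : IsCycInterval (finRotate n) f l I) (hI' : I ≠ Set.univ) :
    ∃ d, d + 1 < n ∧ (l : ℕ) = (f + d) % n ∧
      ∀ x : Fin n, x ∈ I ↔ InCycIcc n f (f + d) x := by
  obtain ⟨d, rfl, rfl⟩ := hI
  have hf := f.isLt
  have hmem : ∀ x : Fin n, x ∈ {x | ∃ j ≤ d, (finRotate n ^ j) f = x} ↔
      ∃ j ≤ d, (x : ℕ) = (f + j) % n := fun x => by
    simp only [Set.mem_ofPred_eq, ← Fin.val_inj, val_finRotate_pow_apply, eq_comm]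
  have hd : d + 1 < n := by
    by_contra! hd
    refine hI' (Set.eq_univ_of_forall fun x => (hmem x).2
      ⟨if (f : ℕ) ≤ x then x - f else x + n - f, by split_ifs <;> omega, ?_⟩)
    have := x.isLt
    rw [Nat.mod_eq_ite_of_lt_two_mul (by split_ifs <;> omega)]
    split_ifs <;> omega
  refine ⟨d, hd, val_finRotate_pow_apply d f, fun x => ?_⟩
  rw [hmem, InCycIcc]
  have := x.isLt
  constructor
  · rintro ⟨j, hj, hx⟩
    rw [Nat.mod_eq_ite_of_lt_two_mul (by omega)] at hx
    split_ifs at hx <;> omega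
  · rintro (hx | hx)
    · exact ⟨x - f, by omega, by rw [Nat.mod_eq_of_lt (by omega)]; omega⟩
    · exact ⟨x + n - f, by omega, by
        rw [Nat.mod_eq_ite_of_lt_two_mul (by omega), if_pos (by omega)]; omega⟩

end FinRotate

lemma IsSetAntichain.isCycIccAntichain {n r : ℕ} {A : Fin r → Set (Fin n)} {a b : Fin r → ℕ}
    (hA : IsSetAntichain A) (ha : ∀ j, a j < n) (hb : ∀ j, b j < a j + n)
    (hmem : ∀ j (x : Fin n), x ∈ A j ↔ InCycIcc n (a j) (b j) x) :
    IsCycIccAntichain n a b where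
  start_lt := ha
  end_lt := hb
  end_lt_end j j' hne hjj' := by
    by_contra! hbb
    refine hA j' j hne.symm fun x hx => ?_
    rw [hmem] at hx ⊢
    unfold InCycIcc at hx ⊢
    omega
  end_sub_lt j j' hj hj' := by
    by_contra! hbb
    refine hA j' j (fun h => by subst h; omega) fun x hx => ?_
    rw [hmem] at hx ⊢
    unfold InCycIcc at hx ⊢
    have := ha j
    omega

lemma IsMultiPathPres.exists_isCycIccAntichain {n r : ℕ} {M : Matroid (Fin n)}
    {f l : Fin r → Fin n} {A : Fin r → Set (Fin n)}
    (hpres : IsMultiPathPres M (finRotate n) f l A) (huniv : ∀ j, A j ≠ Set.univ) :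
    ∃ b : Fin r → ℕ, IsCycIccAntichain n (fun j => f j) b ∧
      (∀ j, (l j : ℕ) = b j % n) ∧
      ∀ j (x : Fin n), x ∈ A j ↔ InCycIcc n (f j) (b j) x := by
  choose d hd hl hmem using fun j => (hpres.2.2.1 j).exists_inCycIcc (huniv j)
  exact ⟨fun j => f j + d j, hpres.2.2.2.1.isCycIccAntichain (fun j => (f j).isLt)
    (fun j => by have := hd j; omega) hmem, hl, hmem⟩

section Presentation

variable {n r : ℕ} {f l : Fin r → Fin n} {b : Fin r → ℕ}

lemma pathHt_range_start (h : IsCycIccAntichain n (fun j => (f j : ℕ)) b) (t : ℕ) :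
    pathHt (Set.range f) t = #{j | (f j : ℕ) < t} :=
  pathHt_range (Function.Injective.of_comp (f := Fin.val) h.injective_start) t

lemma pathHt_range_end (h : IsCycIccAntichain n (fun j => (f j : ℕ)) b)
    (hl : ∀ j, (l j : ℕ) = b j % n) (t : ℕ) :
    pathHt (Set.range l) t = #{j | b j % n < t} := by
  rw [pathHt_range fun j j' hjj' => h.injective_end_mod (by simp only [← hl, hjj'])]
  simp only [hl]

lemma ncard_zero_mem_ne_start [NeZero n] {A : Fin r → Set (Fin n)}
    (h : IsCycIccAntichain n (fun j => (f j : ℕ)) b)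
    (hmem : ∀ j (x : Fin n), x ∈ A j ↔ InCycIcc n (f j) (b j) x) :
    {j | (0 : Fin n) ∈ A j ∧ f j ≠ 0}.ncard = #{j | n ≤ b j} := by
  rw [← Set.ncard_coe_finset, Finset.coe_filter]
  congr 1
  ext j
  have := h.end_lt j
  have := (f j).isLt
  simp only [Set.mem_ofPred_eq, hmem, InCycIcc, Fin.val_zero, Ne, ← Fin.val_inj,
    Finset.mem_univ, true_and]
  omega

end Presentation

namespace IsTransversalPres

variable {n r : ℕ} {M : Matroid (Fin n)} {A : Fin r → Set (Fin n)} {f l : Fin r → Fin n}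
  {b : Fin r → ℕ} {B X : Set (Fin n)}

lemma exists_range_eq_of_indep (hM : IsTransversalPres M Set.univ A) (hX : M.Indep X)
    (hXr : X.ncard = r) :
    ∃ g : Fin r → Fin n, Function.Injective g ∧ Set.range g = X ∧ ∀ j, g j ∈ A j := by
  obtain ⟨-, φ, hφ, hφA⟩ := (hM.2 X).1 hX
  have hφ' : Function.Bijective φ :=
    hφ.bijective_of_nat_card_le (by rw [Nat.card_fin, Nat.card_coe_set_eq, hXr])
  let g := (Equiv.ofBijective φ hφ').symm
  refine ⟨fun j => g j, Subtype.val_injective.comp g.injective, ?_, fun j => ?_⟩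
  · ext x
    exact ⟨by rintro ⟨j, rfl⟩; exact (g j).2, fun hx => ⟨φ ⟨x, hx⟩, by simp [g]⟩⟩
  · simpa only [g, Equiv.ofBijective_apply_symm_apply] using hφA (g j)

lemma indep_range (hM : IsTransversalPres M Set.univ A) {x : Fin r → Fin n}
    (hx : Function.Injective x) {ψ : Fin r → Fin r} (hψ : Function.Injective ψ)
    (hxA : ∀ s, x s ∈ A (ψ s)) : M.Indep (Set.range x) := by
  refine (hM.2 _).2 ⟨Set.subset_univ _, ψ ∘ (Equiv.ofInjective x hx).symm,
    hψ.comp (Equiv.ofInjective x hx).symm.injective, fun y => ?_⟩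
  simpa only [Function.comp_apply, Equiv.apply_ofInjective_symm] using
    hxA ((Equiv.ofInjective x hx).symm y)

lemma pathHt_add_pathHt_le (hM : IsTransversalPres M Set.univ A)
    (h : IsCycIccAntichain n (fun j => (f j : ℕ)) b) (hl : ∀ j, (l j : ℕ) = b j % n)
    (hmem : ∀ j (x : Fin n), x ∈ A j ↔ InCycIcc n (f j) (b j) x)
    (hX : M.Indep X) (hXr : X.ncard = r) (t t' : ℕ) :
    pathHt (Set.range l) t + pathHt X t' ≤
      #{j | n ≤ b j} + pathHt (Set.range f) t' + pathHt X t := by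
  obtain ⟨g, hg, rfl, hgA⟩ := hM.exists_range_eq_of_indep hX hXr
  rw [pathHt_range_end h hl, pathHt_range_start h, pathHt_range hg, pathHt_range hg]
  exact card_end_mod_lt_add_card_lt_le h.end_lt_two_mul (fun j => (hmem j (g j)).1 (hgA j)) t t'

lemma indep_of_pathHt_le (hM : IsTransversalPres M Set.univ A)
    (h : IsCycIccAntichain n (fun j => (f j : ℕ)) b) (hl : ∀ j, (l j : ℕ) = b j % n)
    (hmem : ∀ j (x : Fin n), x ∈ A j ↔ InCycIcc n (f j) (b j) x)
    (hXr : X.ncard = r) {i' : ℕ} (hi' : i' ≤ #{j | n ≤ b j})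
    (hlow : ∀ t ≤ n, pathHt (Set.range l) t ≤ i' + pathHt X t)
    (hupp : ∀ t ≤ n, i' + pathHt X t ≤ #{j | n ≤ b j} + pathHt (Set.range f) t) :
    M.Indep X := by
  let x := (Set.toFinite X).toFinset.orderEmbOfFin (by rw [← Set.ncard_eq_toFinset_card, hXr])
  have hX : Set.range x = X := by
    rw [Finset.range_orderEmbOfFin, Set.Finite.coe_toFinset]
  have hXt : ∀ t, pathHt X t = #{s | (x s : ℕ) < t} := fun t => by
    rw [← hX, pathHt_range x.injective]
  obtain ⟨ψ, hψ, hψA⟩ := h.exists_injective_inCycIcc (x := fun s => (x s : ℕ)) x.strictMono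
    (fun s => (x s).isLt) hi'
    (fun t ht => by rw [← pathHt_range_end h hl, ← hXt]; exact hlow t ht)
    (fun t ht => by rw [← pathHt_range_start h, ← hXt]; exact hupp t ht)
  rw [← hX]
  exact hM.indep_range x.injective hψ fun s => (hmem _ _).2 (hψA s)

/-- If some interval is the whole ground set, there is only one interval, the bases are the
singletons and both sides of the characterization say `u = 0`. -/
theorem not_exists_isBase_exchange_iff_of_eq_univ [NeZero n] {k i : ℕ} {u : Fin n}
    (hM : IsTransversalPres M Set.univ A) (hA : IsSetAntichain A) {j₀ : Fin r}
    (hj₀ : A j₀ = Set.univ) (hk : f j₀ ≠ 0 → 2 ≤ k)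
    (hB : M.IsBase B) (hu : u ∈ B) :
    (¬ ∃ v, v ∉ B ∧ v < u ∧ M.IsBase ((B \ {u}) ∪ {v})) ↔
      ({e | e ≤ u} ⊆ B) ∨
      ((i - 1 + pathHt B u = k - 1 + pathHt (Set.range f) u ∧
        i - 1 + pathHt B (u + 1) = k - 1 + pathHt (Set.range f) (u + 1)) ∧
       ∃ t, (u : ℕ) + 1 ≤ t ∧ t ≤ n ∧ pathHt (Set.range l) t = i - 1 + pathHt B t) := by
  have hall : ∀ j, j = j₀ := fun j => by
    by_contra hj
    exact hA j j₀ hj (hj₀ ▸ Set.subset_univ _)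
  have hrange : ∀ g : Fin r → Fin n, Set.range g = {g j₀} := fun g => by
    ext x
    simp only [Set.mem_range, Set.mem_singleton_iff]
    exact ⟨fun ⟨j, hj⟩ => hall j ▸ hj.symm, fun hx => ⟨j₀, hx.symm⟩⟩
  have hBu : B = {u} := by
    obtain ⟨-, φ, hφ, -⟩ := (hM.2 B).1 hB.indep
    exact Set.eq_singleton_iff_unique_mem.2 ⟨hu, fun y hy =>
      congrArg Subtype.val (hφ ((hall _).trans (hall _).symm : φ ⟨y, hy⟩ = φ ⟨u, hu⟩))⟩
  subst hBu
  have hindep : ∀ v, M.Indep {v} := fun v => (hM.2 _).2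
    ⟨Set.subset_univ _, fun _ => j₀, fun _ _ _ => Subsingleton.elim _ _,
      fun _ => hj₀ ▸ trivial⟩
  trans u = 0
  · constructor
    · intro hinactive
      by_contra hu0
      refine hinactive ⟨0, fun h => hu0 h.symm, Fin.pos_iff_ne_zero.2 hu0, ?_⟩
      rw [Set.union_singleton]
      exact hB.exchange_isBase_of_indep (fun h => hu0 h.symm) (by simpa using hindep 0)
    · rintro rfl ⟨v, -, hv, -⟩
      exact Fin.not_lt_zero v hv
  · constructor
    · rintro rfl
      exact Or.inl fun e he => le_antisymm he (Fin.zero_le e)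
    · rintro (ha | ⟨⟨htop, htop'⟩, t, ht, -, htouch⟩)
      · exact (ha (Fin.zero_le u) : (0 : Fin n) = u).symm
      · simp only [hrange, pathHt_singleton] at htop htop' htouch
        rw [if_neg (lt_irrefl _)] at htop
        rw [if_pos (Nat.lt_add_one _)] at htop'
        rw [if_pos (show (u : ℕ) < t by omega)] at htouch
        have hfu : (f j₀ : ℕ) = u ∧ k ≤ 1 := by
          split_ifs at htop htop' htouch <;> omega
        rw [← Fin.ext hfu.1]
        by_contra hf
        have := hk hf
        omega

end IsTransversalPres

/-- Heights are compared along antidiagonals: step `u` of the path lies on `Q` when both of its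
endpoints do, and the path touches `P` after `t` steps when the heights agree. -/
theorem stmt_17 (m r : ℕ) [NeZero (m + r)] (M : Matroid (Fin (m + r)))
    {rr : ℕ} (f l : Fin rr → Fin (m + r)) (A : Fin rr → Set (Fin (m + r)))
    (hpres : IsMultiPathPres M (finRotate (m + r)) f l A) (hE : M.E = Set.univ)
    (hrr : rr = r)
    (k : ℕ) (hk : k = 1 + {j : Fin rr | (0 : Fin (m + r)) ∈ A j ∧ f j ≠ 0}.ncard)
    (P Q : Set (Fin (m + r)))
    (hP : P = {e | ∃ j, l j = e}) (hQ : Q = {e | ∃ j, f j = e})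
    (B : Set (Fin (m + r))) (hB : M.IsBase B)
    (i : ℕ) (hvalid : IsBPath k m r P Q i B)
    (u : Fin (m + r)) (hu : u ∈ B) :
    (¬ ∃ v, v ∉ B ∧ v < u ∧ M.IsBase ((B \ {u}) ∪ {v})) ↔
      ({e : Fin (m + r) | e ≤ u} ⊆ B) ∨
      ((i - 1 + pathHt B (u : ℕ) = k - 1 + pathHt Q (u : ℕ) ∧
        i - 1 + pathHt B ((u : ℕ) + 1) = k - 1 + pathHt Q ((u : ℕ) + 1)) ∧
       ∃ t, (u : ℕ) + 1 ≤ t ∧ t ≤ m + r ∧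
          pathHt P t = i - 1 + pathHt B t) := by
  subst hrr hP hQ
  have hM : IsTransversalPres M Set.univ A := hE ▸ hpres.2.2.2.2
  by_cases huniv : ∃ j, A j = Set.univ
  · obtain ⟨j₀, hj₀⟩ := huniv
    refine hM.not_exists_isBase_exchange_iff_of_eq_univ hpres.2.2.2.1 hj₀ (fun hf => ?_) hB hu
    have : 0 < {j : Fin rr | (0 : Fin (m + rr)) ∈ A j ∧ f j ≠ 0}.ncard :=
      (Set.ncard_pos (Set.toFinite _)).2 ⟨j₀, hj₀ ▸ Set.mem_univ _, hf⟩
    omega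
  · obtain ⟨b, h, hl, hmem⟩ := hpres.exists_isCycIccAntichain (not_exists.1 huniv)
    have hk' : k - 1 = #{j | m + rr ≤ b j} := by
      rw [hk, Nat.add_sub_cancel_left, ncard_zero_mem_ne_start h hmem]
    have hBr : B.ncard = rr := pathHt_eq_ncard B ▸ hvalid.2.2.1
    have hPr : pathHt (Set.range l) (m + rr) = rr := by
      rw [pathHt_range_end h hl, Finset.filter_true_of_mem fun j _ => Nat.mod_lt _ (NeZero.pos _),
        Finset.card_univ, Fintype.card_fin]
    refine not_exists_isBase_exchange_iff (fun X hX t t' => ?_) (fun X i' hX => ?_) hPr hB hvalid hu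
    · rw [hk']
      exact hM.pathHt_add_pathHt_le h hl hmem hX.indep (hB.ncard_eq_ncard_of_isBase hX ▸ hBr) t t'
    · obtain ⟨hi'1, hi'k, hXr, hbd⟩ := hX
      exact hM.indep_of_pathHt_le h hl hmem (pathHt_eq_ncard X ▸ hXr) (i' := i' - 1) (by omega)
        (fun t ht => (hbd t ht).1) (fun t ht => hk' ▸ (hbd t ht).2)
end

section
/- Every set in a minimal σ-interval presentation of a multi-path matroid M is a cocircuit of M; consequently, any minimal σ-interval presentation is a minimal presentation of M. In particular, every set in a minimal σ-interval presentation of a multi-path matroid of nullity m has at most m+1 elements. -/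
open Set Matroid

variable {α ι : Type*}

/-!
An interval `A i` of a presentation meets every base, so it is a cocircuit as soon as each of
its elements is the only element of `A i` in some base, that is, as soon as the sets `A j \ A i`
(`j ≠ i`) have distinct representatives. These sets are intervals of the arc `M.E \ A i`, and
for them Hall's condition reduces to `r ≤ |M.E \ A i| + 1`.

Minimality gives this bound. If no independent set `S` is forced to match the first element
`f i` to `A i` (a tight set: `S ∩ A i = {f i}` and `S` meets exactly `|S|` intervals), then by
Hall's theorem `f i` can be cut from `A i`; cutting also the first elements of the intervals
this forces (`A t ⊇ A s \ {f s}`) and rearranging matchings along that chain gives a smaller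
σ-interval presentation. Given a tight set `S`, the `r - |S|` intervals it misses have distinct
last elements, lying in `M.E \ A i` outside `S`, while `S \ {f i}` lies in `M.E \ A i`.

The other two claims hold for any presentation by cocircuits: a smaller presentation still meets
every base, and a cocircuit minus a point is coindependent.
-/

open Function

section MatroidFacts

variable {M : Matroid α} {B I K X : Set α}

lemma isCocircuitOf_iff_isCocircuit : IsCocircuitOf M K ↔ M.IsCocircuit K := by
  rw [isCocircuit_def, isCircuit_iff_forall_ssubset, IsCocircuitOf, IsCircuitOf]
  exact and_congr_right fun hK ↦ forall₂_congr fun D hD ↦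
    not_dep_iff (hD.subset.trans hK.subset_ground)

lemma Matroid.isCocircuit_of_forall_isBase (hmeet : ∀ B, M.IsBase B → (K ∩ B).Nonempty)
    (hsep : ∀ e ∈ K, ∃ B, M.IsBase B ∧ K ∩ B ⊆ {e}) : M.IsCocircuit K := by
  refine isCocircuit_iff_minimal.2 ⟨hmeet, fun X hX hXK e he ↦ ?_⟩
  obtain ⟨B, hB, hKB⟩ := hsep e he
  obtain ⟨x, hxX, hxB⟩ := hX B hB
  rwa [← hKB ⟨hXK hxX, hxB⟩]

lemma Matroid.IsCocircuit.eq_of_subset (hK : M.IsCocircuit K)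
    (hX : ∀ B, M.IsBase B → (X ∩ B).Nonempty) (hXK : X ⊆ K) : X = K :=
  (isCocircuit_iff_minimal.1 hK).eq_of_subset hX hXK

lemma Matroid.Indep.ncard_le_of_isBase [M.Finite] (hI : M.Indep I) (hB : M.IsBase B) :
    I.ncard ≤ B.ncard := by
  obtain ⟨B', hB', hIB'⟩ := hI.exists_isBase_superset
  rw [hB.ncard_eq_ncard_of_isBase hB']
  exact ncard_le_ncard hIB' hB'.finite

lemma Matroid.IsCocircuit.ncard_le_ncard_sdiff_add_one [M.Finite] (hK : M.IsCocircuit K)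
    (hB : M.IsBase B) : K.ncard ≤ (M.E \ B).ncard + 1 := by
  obtain ⟨e, he⟩ := hK.nonempty
  have hKe : (K \ {e}).ncard ≤ (M.E \ B).ncard :=
    (hK.isCircuit.sdiff_singleton_indep he).ncard_le_of_isBase hB.compl_isBase_dual
  rw [ncard_sdiff_singleton_of_mem he] at hKe
  omega

end MatroidFacts

/-- `S` is an independent set meeting `A i` only in `e` and meeting exactly `|S|` of the sets
`A j`, so that every matching of `S` into `A` matches `e` to `A i`. -/
def IsTightAt (M : Matroid α) (A : ι → Set α) (i : ι) (e : α) (S : Set α) : Prop :=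
  M.Indep S ∧ S ∩ A i = {e} ∧ {j | (A j ∩ S).Nonempty}.ncard = S.ncard

namespace IsTransversalPres

variable {M : Matroid α} {A : ι → Set α} {B I : Set α} {ψ : ι → α}

lemma indep_range_s19 (hA : IsTransversalPres M M.E A) (hAE : ∀ j, A j ⊆ M.E)
    (hψ : Injective ψ) (hψA : ∀ j, ψ j ∈ A j) : M.Indep (range ψ) := by
  refine ((hA.2 _).2 ⟨range_subset_iff.2 fun j ↦ hAE j (hψA j),
    (Equiv.ofInjective ψ hψ).symm, Equiv.injective _, fun x ↦ ?_⟩)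
  simpa [Equiv.apply_ofInjective_symm] using hψA ((Equiv.ofInjective ψ hψ).symm x)

lemma ncard_le_of_indep [Finite ι] (hA : IsTransversalPres M M.E A) (hI : M.Indep I) :
    I.ncard ≤ Nat.card ι := by
  obtain ⟨-, φ, hφ, -⟩ := (hA.2 I).1 hI
  rw [← Nat.card_coe_set_eq]
  exact Nat.card_le_card_of_injective φ hφ

lemma isBase_range [Finite ι] [M.Finite] (hA : IsTransversalPres M M.E A)
    (hAE : ∀ j, A j ⊆ M.E) (hψ : Injective ψ) (hψA : ∀ j, ψ j ∈ A j) :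
    M.IsBase (range ψ) := by
  obtain ⟨B, hB, hψB⟩ := (hA.indep_range_s19 hAE hψ hψA).exists_isBase_superset
  have hψcard : (range ψ).ncard = Nat.card ι := by
    rw [← Nat.card_coe_set_eq, Nat.card_range_of_injective hψ]
  rwa [eq_of_subset_of_ncard_le hψB (by rw [hψcard]; exact hA.ncard_le_of_indep hB.indep)
    hB.finite]

lemma ncard_eq_of_isBase [Finite ι] [M.Finite] (hA : IsTransversalPres M M.E A)
    (hAE : ∀ j, A j ⊆ M.E) (hψ : Injective ψ) (hψA : ∀ j, ψ j ∈ A j) (hB : M.IsBase B) :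
    B.ncard = Nat.card ι := by
  rw [hB.ncard_eq_ncard_of_isBase (hA.isBase_range hAE hψ hψA), ← Nat.card_coe_set_eq,
    Nat.card_range_of_injective hψ]

lemma exists_sdr_of_isBase [Finite ι] [M.Finite] (hA : IsTransversalPres M M.E A)
    (hB : M.IsBase B) (hcard : B.ncard = Nat.card ι) :
    ∃ ψ : ι → α, Injective ψ ∧ (∀ j, ψ j ∈ A j) ∧ range ψ = B := by
  obtain ⟨-, φ, hφ, hφA⟩ := (hA.2 B).1 hB.indep
  have : Finite B := hB.finite
  set e := Equiv.ofBijective φ (hφ.bijective_of_nat_card_le (by rw [Nat.card_coe_set_eq, hcard]))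
  refine ⟨fun j ↦ e.symm j, Subtype.val_injective.comp e.symm.injective, fun j ↦ ?_, ?_⟩
  · have := hφA (e.symm j)
    rwa [show φ (e.symm j) = j from e.apply_symm_apply j] at this
  · ext x
    exact ⟨by rintro ⟨j, rfl⟩; exact (e.symm j).2, fun hx ↦ ⟨e ⟨x, hx⟩, by simp⟩⟩

lemma inter_nonempty_of_isBase [Finite ι] [M.Finite] (hA : IsTransversalPres M M.E A)
    (hB : M.IsBase B) (hcard : B.ncard = Nat.card ι) (j : ι) : (A j ∩ B).Nonempty := by
  obtain ⟨ψ, -, hψA, rfl⟩ := hA.exists_sdr_of_isBase hB hcard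
  exact ⟨ψ j, hψA j, j, rfl⟩

lemma of_subset_of_forall_isBase [M.Finite] {A' : ι → Set α} (hA : IsTransversalPres M M.E A)
    (hA'A : ∀ j, A' j ⊆ A j)
    (hA' : ∀ B, M.IsBase B → ∃ ψ : ι → α, Injective ψ ∧ (∀ j, ψ j ∈ A' j) ∧ range ψ = B) :
    IsTransversalPres M M.E A' := by
  refine ⟨rfl, fun I ↦ ⟨fun hI ↦ ⟨hI.subset_ground, ?_⟩, fun ⟨hIE, φ, hφ, hφA⟩ ↦
    (hA.2 I).2 ⟨hIE, φ, hφ, fun x ↦ hA'A _ (hφA x)⟩⟩⟩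
  obtain ⟨B, hB, hIB⟩ := hI.exists_isBase_superset
  obtain ⟨ψ, hψ, hψA, rfl⟩ := hA' B hB
  refine ⟨fun x ↦ (Equiv.ofInjective ψ hψ).symm ⟨x, hIB x.2⟩,
    fun x y hxy ↦ Subtype.ext (by simpa using hxy), fun x ↦ ?_⟩
  simpa [Equiv.apply_ofInjective_symm] using hψA ((Equiv.ofInjective ψ hψ).symm ⟨x, hIB x.2⟩)

lemma isCocircuit_of_sdr_sdiff [Finite ι] [DecidableEq ι] [M.Finite]
    (hA : IsTransversalPres M M.E A) (hAE : ∀ j, A j ⊆ M.E) {i : ι} (hAi : (A i).Nonempty)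
    (g : {j // j ≠ i} → α) (hg : Injective g) (hgA : ∀ j, g j ∈ A j.1 \ A i) :
    M.IsCocircuit (A i) := by
  set ψ : α → ι → α := fun e j ↦ if h : j = i then e else g ⟨j, h⟩
  have hψA : ∀ e ∈ A i, ∀ j, ψ e j ∈ A j := by
    intro e he j
    by_cases h : j = i
    · subst h; simpa [ψ] using he
    · simpa [ψ, h] using (hgA ⟨j, h⟩).1
  have hψ : ∀ e ∈ A i, Injective (ψ e) := by
    intro e he a b hab
    by_cases ha : a = i <;> by_cases hb : b = i <;> simp only [ψ, ha, hb, dite_true,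
      dite_false] at hab
    · rw [ha, hb]
    · exact absurd (hab ▸ he) (hgA _).2
    · exact absurd (hab ▸ he) (hgA _).2
    · simpa using hg hab
  obtain ⟨e₀, he₀⟩ := hAi
  refine isCocircuit_of_forall_isBase (fun B hB ↦ hA.inter_nonempty_of_isBase hB
    (hA.ncard_eq_of_isBase hAE (hψ e₀ he₀) (hψA e₀ he₀) hB) i) fun e he ↦
    ⟨_, hA.isBase_range hAE (hψ e he) (hψA e he), ?_⟩
  rintro _ ⟨hxA, j, rfl⟩
  by_cases h : j = i
  · simp [ψ, h]
  · exact absurd hxA (by simpa [ψ, h] using (hgA ⟨j, h⟩).2)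

lemma ncard_le_ncard_setOf_inter_nonempty [Finite ι] (hA : IsTransversalPres M M.E A)
    (hI : M.Indep I) : I.ncard ≤ {j | (A j ∩ I).Nonempty}.ncard := by
  obtain ⟨-, φ, hφ, hφA⟩ := (hA.2 I).1 hI
  rw [← Nat.card_coe_set_eq, ← Nat.card_coe_set_eq]
  exact Nat.card_le_card_of_injective (fun x ↦ ⟨φ x, x.1, hφA x, x.2⟩)
    fun a b hab ↦ hφ (congrArg Subtype.val hab)

lemma isTightAt_of_ncard_lt [Finite ι] [DecidableEq ι] (hA : IsTransversalPres M M.E A)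
    {i : ι} {e : α} {S : Set α} (hS : M.Indep S)
    (hlt : {j | (update A i (A i \ {e}) j ∩ S).Nonempty}.ncard < S.ncard) :
    IsTightAt M A i e S := by
  set J := {j | (A j ∩ S).Nonempty}
  set J' := {j | (update A i (A i \ {e}) j ∩ S).Nonempty}
  have hle : S.ncard ≤ J.ncard := hA.ncard_le_ncard_setOf_inter_nonempty hS
  have hsub : J \ {i} ⊆ J' := by
    rintro j ⟨hj, hji⟩
    obtain ⟨x, hxA, hxS⟩ := hj
    exact ⟨x, by rwa [update_of_ne hji], hxS⟩
  have hcut : ∀ x ∈ S, x ∈ A i → x = e := by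
    intro x hx hxA
    by_contra hxe
    have hJJ' : J ⊆ J' := fun j hj ↦ by
      by_cases hji : j = i
      · exact ⟨x, by simp [hji, hxA, hxe], hx⟩
      · exact hsub ⟨hj, hji⟩
    exact (hle.trans (ncard_le_ncard hJJ')).not_gt hlt
  have hiJ : i ∈ J := by
    by_contra hi
    rw [← sdiff_singleton_eq_self hi] at hle
    exact (hle.trans (ncard_le_ncard hsub)).not_gt hlt
  have hcard := ncard_le_ncard hsub
  rw [ncard_sdiff_singleton_of_mem hiJ] at hcard
  have hpos := (ncard_pos (toFinite _)).2 ⟨i, hiJ⟩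
  obtain ⟨y, hyA, hyS⟩ := hiJ
  obtain rfl := hcut y hyS hyA
  exact ⟨hS, subset_antisymm (fun x hx ↦ hcut x hx.1 hx.2) (by simpa using And.intro hyS hyA),
    le_antisymm (by omega : J.ncard ≤ S.ncard) hle⟩

/-- By Hall's theorem, an independent set fails to be matched into the cut family only at a
tight set. -/
lemma update_sdiff [Fintype ι] [DecidableEq ι] (hA : IsTransversalPres M M.E A) {i : ι} {e : α}
    (hnt : ∀ S, ¬ IsTightAt M A i e S) :
    IsTransversalPres M M.E (update A i (A i \ {e})) := by
  classical
  refine ⟨rfl, fun I ↦ ⟨fun hI ↦ ⟨hI.subset_ground, ?_⟩, fun ⟨hIE, φ, hφ, hφA⟩ ↦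
    (hA.2 I).2 ⟨hIE, φ, hφ, fun x ↦ ?_⟩⟩⟩
  · obtain ⟨-, φ₀, hφ₀, -⟩ := (hA.2 I).1 hI
    have : Fintype I := @Fintype.ofFinite I (Finite.of_injective φ₀ hφ₀)
    refine (Fintype.all_card_le_filter_rel_iff_exists_injective
      fun (x : I) j ↦ (x : α) ∈ update A i (A i \ {e}) j).1 fun s ↦ ?_
    by_contra! hlt
    set S : Set α := Subtype.val '' (s : Set I)
    refine hnt S (hA.isTightAt_of_ncard_lt (hI.subset (by rintro _ ⟨x, -, rfl⟩; exact x.2)) ?_)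
    calc {j | (update A i (A i \ {e}) j ∩ S).Nonempty}.ncard
        = (Finset.univ.filter fun j ↦ ∃ x ∈ s, (x : α) ∈ update A i (A i \ {e}) j).card := by
          rw [← ncard_coe_finset]
          congr 1
          ext j
          simp [S, Set.Nonempty, and_comm]
      _ < s.card := hlt
      _ = S.ncard := by rw [ncard_image_of_injective _ Subtype.val_injective, ncard_coe_finset]
  · have := hφA x
    by_cases h : φ x = i
    · rw [h, update_self] at this
      rw [h]
      exact this.1
    · rwa [update_of_ne h] at this

end IsTransversalPres

lemma Relation.ReflTransGen.exists_rel_of_not {β : Type*} {R : β → β → Prop} {P : β → Prop}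
    {a b : β} (h : Relation.ReflTransGen R a b) (ha : P a) (hb : ¬ P b) :
    ∃ c d, Relation.ReflTransGen R a c ∧ R c d ∧ P c ∧ ¬ P d := by
  induction h with
  | refl => exact absurd ha hb
  | @tail c d hac hcd ih =>
    by_cases hc : P c
    · exact ⟨c, d, hac, hcd, hc, hb⟩
    · exact ih hc

lemma forall_lt_of_lt_of_notMem {D : Finset ℕ}
    (hconv : ∀ {a b c}, a ∈ D → b ∈ D → a < c → c < b → c ∈ D) {a c : ℕ} (hcD : c ∉ D)
    (ha : a ∈ D) (hac : a < c) : ∀ b ∈ D, b < c := fun b hb ↦ by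
  by_contra! hcb
  exact hcD (hconv ha hb hac (lt_of_le_of_ne hcb fun h ↦ hcD (h ▸ hb)))

open Finset in
/-- A subfamily meeting both `1` and `m` either covers `[1, m]` or splits at an uncovered point
into two smaller subfamilies with disjoint unions. -/
lemma card_le_card_biUnion_of_intervals {κ : Type*} [Fintype κ] [DecidableEq κ]
    (D : κ → Finset ℕ) (m : ℕ)
    (hconv : ∀ j {a b c}, a ∈ D j → b ∈ D j → a < c → c < b → c ∈ D j)
    (hleft : ∀ s : Finset κ, (∀ j ∈ s, 1 ∉ D j) → #s ≤ #(s.biUnion D))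
    (hright : ∀ s : Finset κ, (∀ j ∈ s, m ∉ D j) → #s ≤ #(s.biUnion D))
    (hκ : Fintype.card κ ≤ m) (s : Finset κ) : #s ≤ #(s.biUnion D) := by
  induction hn : #s using Nat.strong_induction_on generalizing s with
  | _ n ih =>
  subst hn
  by_cases h1 : ∀ j ∈ s, 1 ∉ D j
  · exact hleft s h1
  by_cases hm : ∀ j ∈ s, m ∉ D j
  · exact hright s hm
  obtain ⟨j₁, hj₁s, hj₁⟩ : ∃ j ∈ s, 1 ∈ D j := by simpa using h1
  obtain ⟨j₂, hj₂s, hj₂⟩ : ∃ j ∈ s, m ∈ D j := by simpa using hm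
  by_cases hcov : Finset.Icc 1 m ⊆ s.biUnion D
  · calc #s ≤ m := (card_le_univ s).trans hκ
      _ = #(Finset.Icc 1 m) := by simp
      _ ≤ #(s.biUnion D) := card_le_card hcov
  obtain ⟨c, hc, hcs⟩ := Finset.not_subset.1 hcov
  have hnc : ∀ j ∈ s, c ∉ D j := fun j hj hcj ↦ hcs (mem_biUnion.2 ⟨j, hj, hcj⟩)
  have hcm := Finset.mem_Icc.1 hc
  set P : κ → Prop := fun j ↦ ∃ a ∈ D j, a < c
  have hlow : ∀ j ∈ s.filter P, ∀ b ∈ D j, b < c := fun j hj ↦ by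
    obtain ⟨hjs, a, ha, hac⟩ := mem_filter.1 hj
    exact forall_lt_of_lt_of_notMem (hconv j) (hnc j hjs) ha hac
  have hj₁ : j₁ ∈ s.filter P :=
    mem_filter.2 ⟨hj₁s, 1, hj₁, lt_of_le_of_ne hcm.1 fun h ↦ hnc j₁ hj₁s (h ▸ hj₁)⟩
  have hj₂ : j₂ ∈ s.filter (¬ P ·) :=
    mem_filter.2 ⟨hj₂s, fun h ↦ (hlow j₂ (mem_filter.2 ⟨hj₂s, h⟩) m hj₂).not_ge hcm.2⟩
  have hdisj : Disjoint ((s.filter P).biUnion D) ((s.filter (¬ P ·)).biUnion D) := by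
    refine disjoint_left.2 fun x hx₁ hx₂ ↦ ?_
    obtain ⟨j, hj, hxj⟩ := mem_biUnion.1 hx₁
    obtain ⟨j', hj', hxj'⟩ := mem_biUnion.1 hx₂
    exact (mem_filter.1 hj').2 ⟨x, hxj', hlow j hj x hxj⟩
  have hsplit := card_filter_add_card_filter_not (s := s) P
  have hpos₁ := card_pos.2 ⟨j₁, hj₁⟩
  have hpos₂ := card_pos.2 ⟨j₂, hj₂⟩
  calc #s = #(s.filter P) + #(s.filter (¬ P ·)) := hsplit.symm
    _ ≤ #((s.filter P).biUnion D) + #((s.filter (¬ P ·)).biUnion D) :=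
      add_le_add (ih _ (by omega) _ rfl) (ih _ (by omega) _ rfl)
    _ = #(s.biUnion D) := by
      rw [← card_union_of_disjoint hdisj, ← Finset.union_biUnion, filter_union_filter_not_eq]

lemma Equiv.Perm.pow_apply_pow_apply (σ : Equiv.Perm α) (a b : ℕ) (x : α) :
    (σ ^ a) ((σ ^ b) x) = (σ ^ (a + b)) x := by
  rw [pow_add, Equiv.Perm.mul_apply]

namespace IsCyclicOn

variable {σ : Equiv.Perm α} {E : Set α} {x y : α} {a b : ℕ}

lemma mapsTo (hσ : IsCyclicOn σ E) : MapsTo σ E E := by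
  intro x hx
  by_contra h
  rw [σ.injective (hσ.1 _ h)] at h
  exact h hx

lemma pow_apply_mem (hσ : IsCyclicOn σ E) (n : ℕ) (hx : x ∈ E) : (σ ^ n) x ∈ E := by
  induction n with
  | zero => exact hx
  | succ n ih => rw [pow_succ', Equiv.Perm.mul_apply]; exact hσ.mapsTo ih

variable [Finite α]

lemma isCycleOn (hσ : IsCyclicOn σ E) : σ.IsCycleOn E := by
  refine ⟨(E.toFinite.injOn_iff_bijOn_of_mapsTo hσ.mapsTo).1 σ.injective.injOn,
    fun x hx y hy ↦ ?_⟩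
  obtain ⟨n, hn⟩ := hσ.2 x hx y hy
  exact ⟨n, by simpa using hn⟩

lemma pow_apply_eq_pow_apply (hσ : IsCyclicOn σ E) (hx : x ∈ E) :
    (σ ^ a) x = (σ ^ b) x ↔ a ≡ b [MOD E.ncard] := by
  obtain ⟨s, rfl⟩ := E.toFinite.exists_finset_coe
  rw [ncard_coe_finset]
  exact hσ.isCycleOn.pow_apply_eq_pow_apply hx

lemma pow_ncard_apply (hσ : IsCyclicOn σ E) (hx : x ∈ E) : (σ ^ E.ncard) x = x := by
  simpa using (hσ.pow_apply_eq_pow_apply (b := 0) hx).2 (by simp [Nat.ModEq])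

lemma eq_of_pow_apply_eq (hσ : IsCyclicOn σ E) (hx : x ∈ E) (ha : a < E.ncard)
    (hb : b < E.ncard) (h : (σ ^ a) x = (σ ^ b) x) : a = b :=
  ((hσ.pow_apply_eq_pow_apply hx).1 h).eq_of_lt_of_lt ha hb

lemma exists_pow_apply_eq (hσ : IsCyclicOn σ E) (hx : x ∈ E) (hy : y ∈ E) :
    ∃ n < E.ncard, (σ ^ n) x = y := by
  obtain ⟨s, rfl⟩ := E.toFinite.exists_finset_coe
  rw [ncard_coe_finset]
  exact hσ.isCycleOn.exists_pow_eq hx hy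

end IsCyclicOn

/-- `IsMultiPathPres M σ f l A`, with `A s` the σ-interval of length `k s + 1`. -/
structure IsMultiPathPresLen (M : Matroid α) (σ : Equiv.Perm α) {r : ℕ} (f l : Fin r → α)
    (A : Fin r → Set α) (k : Fin r → ℕ) : Prop where
  cyc : IsCyclicOn σ M.E
  f_mem_ground : ∀ s, f s ∈ M.E
  pow_apply_f : ∀ s, (σ ^ k s) (f s) = l s
  eq_setOf : ∀ s, A s = {x | ∃ j ≤ k s, (σ ^ j) (f s) = x}
  antichain : IsSetAntichain A
  pres : IsTransversalPres M M.E A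

lemma IsMultiPathPres.exists_len {M : Matroid α} {σ : Equiv.Perm α} {r : ℕ}
    {f l : Fin r → α} {A : Fin r → Set α} (h : IsMultiPathPres M σ f l A) :
    ∃ k, IsMultiPathPresLen M σ f l A k := by
  obtain ⟨hcyc, hfE, hint, hanti, hA⟩ := h
  choose k hkl hkA using hint
  exact ⟨k, hcyc, hfE, hkl, hkA, hanti, hA⟩

/-- `A t` contains `A s` minus its first element: once `f s` is cut from `A s`, the antichain
condition forces `f t` to be cut from `A t` as well. -/
def CutForces {r : ℕ} (f : Fin r → α) (A : Fin r → Set α) (k : Fin r → ℕ) (s t : Fin r) :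
    Prop :=
  s ≠ t ∧ 1 ≤ k s ∧ A s \ {f s} ⊆ A t

open Classical in
noncomputable def sdiffPos (σ : Equiv.Perm α) {r : ℕ} (l : Fin r → α) (A : Fin r → Set α)
    (m : ℕ) (i j : Fin r) : Finset ℕ :=
  (Finset.Icc 1 m).filter fun c ↦ (σ ^ c) (l i) ∈ A j \ A i

lemma mem_sdiffPos {σ : Equiv.Perm α} {r : ℕ} {l : Fin r → α} {A : Fin r → Set α} {m c : ℕ}
    {i j : Fin r} :
    c ∈ sdiffPos σ l A m i j ↔ (1 ≤ c ∧ c ≤ m) ∧ (σ ^ c) (l i) ∈ A j \ A i := by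
  simp [sdiffPos]

namespace IsMultiPathPresLen

variable {M : Matroid α} {σ : Equiv.Perm α} {r : ℕ} {f l : Fin r → α} {A : Fin r → Set α}
  {k : Fin r → ℕ} {s t i j : Fin r} {x y : α} {a b c : ℕ} {S : Set α}

section Basic

variable (H : IsMultiPathPresLen M σ f l A k)
include H

lemma mem_iff : x ∈ A s ↔ ∃ a ≤ k s, (σ ^ a) (f s) = x := by
  rw [H.eq_setOf s]; rfl

lemma pow_apply_f_mem (ha : a ≤ k s) : (σ ^ a) (f s) ∈ A s :=
  H.mem_iff.2 ⟨a, ha, rfl⟩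

lemma f_mem : f s ∈ A s := H.pow_apply_f_mem (Nat.zero_le _)

lemma l_mem : l s ∈ A s := H.mem_iff.2 ⟨k s, le_rfl, H.pow_apply_f s⟩

lemma isCycInterval : IsCycInterval σ (f s) (l s) (A s) := ⟨k s, H.pow_apply_f s, H.eq_setOf s⟩

lemma subset_ground : A s ⊆ M.E := by
  intro x hx
  obtain ⟨a, -, rfl⟩ := H.mem_iff.1 hx
  exact H.cyc.pow_apply_mem a (H.f_mem_ground s)

lemma f_injective : Injective f := by
  have hmono : ∀ s t, f s = f t → k s ≤ k t → A s ⊆ A t := by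
    intro s t hst hk x hx
    obtain ⟨a, ha, rfl⟩ := H.mem_iff.1 hx
    rw [hst]
    exact H.pow_apply_f_mem (ha.trans hk)
  intro s t hst
  by_contra hne
  rcases le_total (k s) (k t) with h | h
  · exact H.antichain s t hne (hmono s t hst h)
  · exact H.antichain t s (Ne.symm hne) (hmono t s hst.symm h)

lemma pred_mem (hy : y ∈ A s) (hne : y ≠ f s) : σ⁻¹ y ∈ A s := by
  obtain ⟨a, ha, rfl⟩ := H.mem_iff.1 hy
  obtain ⟨a, rfl⟩ : ∃ b, a = b + 1 := Nat.exists_eq_add_one.2 (Nat.pos_of_ne_zero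
    (by rintro rfl; exact hne rfl))
  rw [pow_succ', Equiv.Perm.mul_apply]
  simpa using H.pow_apply_f_mem (a := a) (by omega)

lemma pred_f_mem (hne : j ≠ i) (hf : f i ∈ A j) : σ⁻¹ (f i) ∈ A j :=
  H.pred_mem hf fun h ↦ hne (H.f_injective h).symm

lemma mem_iff_inv_pow_apply_l : x ∈ A s ↔ ∃ a ≤ k s, ((σ⁻¹) ^ a) (l s) = x := by
  have key : ∀ a ≤ k s, ((σ⁻¹) ^ a) (l s) = (σ ^ (k s - a)) (f s) := by
    intro a ha
    rw [← H.pow_apply_f s, inv_pow, Equiv.Perm.inv_eq_iff_eq,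
      Equiv.Perm.pow_apply_pow_apply, Nat.add_sub_cancel' ha]
  rw [H.mem_iff]
  constructor
  · rintro ⟨a, ha, rfl⟩
    refine ⟨k s - a, by omega, ?_⟩
    rw [key _ (by omega), Nat.sub_sub_self ha]
  · rintro ⟨a, ha, rfl⟩
    exact ⟨k s - a, by omega, (key a ha).symm⟩

lemma l_injective : Injective l := by
  have hmono : ∀ s t, l s = l t → k s ≤ k t → A s ⊆ A t := by
    intro s t hst hk z hz
    obtain ⟨a, ha, rfl⟩ := H.mem_iff_inv_pow_apply_l.1 hz
    rw [hst]
    exact H.mem_iff_inv_pow_apply_l.2 ⟨a, ha.trans hk, rfl⟩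
  intro s t hst
  by_contra hne
  rcases le_total (k s) (k t) with h | h
  · exact H.antichain s t hne (hmono s t hst h)
  · exact H.antichain t s (Ne.symm hne) (hmono t s hst.symm h)

/-- `A j` ends inside `A i` but does not lie inside it, so it starts before `A i`. -/
lemma f_mem_of_l_mem (hne : j ≠ i) (hl : l j ∈ A i) : f i ∈ A j := by
  obtain ⟨p, hp, hpl⟩ := H.mem_iff.1 hl
  by_cases hpk : p ≤ k j
  · refine H.mem_iff_inv_pow_apply_l.2 ⟨p, hpk, ?_⟩
    rw [← hpl, inv_pow, Equiv.Perm.inv_eq_iff_eq]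
  · refine absurd (fun z hz ↦ ?_) (H.antichain j i hne)
    obtain ⟨a, ha, rfl⟩ := H.mem_iff_inv_pow_apply_l.1 hz
    have : ((σ⁻¹) ^ a) ((σ ^ p) (f i)) = (σ ^ (p - a)) (f i) := by
      rw [inv_pow, Equiv.Perm.inv_eq_iff_eq, Equiv.Perm.pow_apply_pow_apply,
        Nat.add_sub_cancel' (by omega)]
    rw [← hpl, this]
    exact H.pow_apply_f_mem (by omega)

/-- `A j` starts inside `A i` but does not lie inside it, so it runs on past `l i`. -/
lemma succ_l_mem_of_f_mem (hne : j ≠ i) (hfj : f j ∈ A i) : σ (l i) ∈ A j := by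
  classical
  have hex : ∃ a, (σ ^ a) (f j) ∉ A i := by
    by_contra! hcon
    exact H.antichain j i hne fun z hz ↦ by
      obtain ⟨a, -, rfl⟩ := H.mem_iff.1 hz
      exact hcon a
  have hexit := Nat.find_spec hex
  have hmin : ∀ b < Nat.find hex, (σ ^ b) (f j) ∈ A i := fun b hb ↦
    not_not.1 (Nat.find_min hex hb)
  obtain ⟨a, ha⟩ : ∃ a, Nat.find hex = a + 1 :=
    Nat.exists_eq_add_one.2 (Nat.pos_of_ne_zero fun h ↦ hexit (by simpa [h] using hfj))
  rw [ha] at hexit hmin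
  have hak : a + 1 ≤ k j := by
    by_contra! hka
    exact H.antichain j i hne fun z hz ↦ by
      obtain ⟨b, hb, rfl⟩ := H.mem_iff.1 hz
      exact hmin b (by omega)
  obtain ⟨u, hu, hue⟩ := H.mem_iff.1 (hmin a (by omega))
  have hsucc : (σ ^ (a + 1)) (f j) = (σ ^ (u + 1)) (f i) := by
    rw [pow_succ', Equiv.Perm.mul_apply, ← hue, pow_succ', Equiv.Perm.mul_apply]
  have huk : u = k i := by
    by_contra hne'
    exact hexit (hsucc ▸ H.pow_apply_f_mem (by omega))
  rw [← H.pow_apply_f i, ← huk, hue, ← Equiv.Perm.mul_apply, ← pow_succ']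
  exact H.pow_apply_f_mem hak

lemma pow_apply_l_eq (c : ℕ) : (σ ^ c) (l i) = (σ ^ (c + k i)) (f i) := by
  rw [← H.pow_apply_f i, Equiv.Perm.pow_apply_pow_apply]

end Basic

section Proper

variable [Finite α] (H : IsMultiPathPresLen M σ f l A k) (hr : 2 ≤ r)
include H hr

/-- With at least two intervals in the antichain, none of them is the whole ground set. -/
lemma k_add_two_le : k s + 2 ≤ M.E.ncard := by
  by_contra hcon
  obtain ⟨j, hj⟩ : ∃ j : Fin r, j ≠ s := by
    rcases eq_or_ne (⟨0, by omega⟩ : Fin r) s with h | h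
    · exact ⟨⟨1, by omega⟩, by simp [← h, Fin.ext_iff]⟩
    · exact ⟨_, h⟩
  refine H.antichain j s hj (H.subset_ground.trans fun y hy ↦ ?_)
  obtain ⟨a, ha, rfl⟩ := H.cyc.exists_pow_apply_eq (H.f_mem_ground s) hy
  exact H.pow_apply_f_mem (by omega)

lemma eq_of_pow_apply_f_eq (ha : a ≤ k s + 1) (hb : b ≤ k s + 1)
    (hab : (σ ^ a) (f s) = (σ ^ b) (f s)) : a = b := by
  have := H.k_add_two_le hr (s := s)
  exact H.cyc.eq_of_pow_apply_eq (H.f_mem_ground s) (by omega) (by omega) hab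

lemma apply_ne (hx : x ∈ M.E) : σ x ≠ x := by
  intro hfix
  have hpow : ∀ a : ℕ, (σ ^ a) x = x := fun a ↦ by
    induction a with
    | zero => rfl
    | succ a ih => rw [pow_succ', Equiv.Perm.mul_apply, ih, hfix]
  have hf : ∀ s, f s = x := fun s ↦ by
    obtain ⟨a, -, ha⟩ := H.cyc.exists_pow_apply_eq hx (H.f_mem_ground s)
    rw [← ha, hpow]
  exact absurd (H.f_injective ((hf ⟨0, by omega⟩).trans (hf ⟨1, by omega⟩).symm)) (by simp)

lemma succ_f_mem_sdiff (hks : 1 ≤ k s) : σ (f s) ∈ A s \ {f s} :=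
  ⟨by simpa using H.pow_apply_f_mem (a := 1) hks, H.apply_ne hr (H.f_mem_ground s)⟩

lemma ncard_eq : (A s).ncard = k s + 1 := by
  classical
  have hA : A s = ((Finset.range (k s + 1)).image fun a ↦ (σ ^ a) (f s) : Finset α) := by
    ext z
    simp only [Finset.coe_image, Finset.coe_range, mem_image, mem_Iio, H.mem_iff,
      Nat.lt_succ_iff]
  rw [hA, ncard_coe_finset, Finset.card_image_of_injOn, Finset.card_range]
  intro a ha b hb hab
  simp only [Finset.coe_range, mem_Iio] at ha hb
  exact H.eq_of_pow_apply_f_eq hr (by omega) (by omega) hab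

lemma ncard_ground_sdiff : (M.E \ A i).ncard = M.E.ncard - 1 - k i := by
  rw [ncard_sdiff H.subset_ground, H.ncard_eq hr]
  omega

/-- `M.E \ A i` is the σ-interval `σ (l i), …, σ⁻¹ (f i)`. -/
lemma mem_ground_sdiff_iff :
    y ∈ M.E \ A i ↔ ∃ c, 1 ≤ c ∧ c ≤ M.E.ncard - 1 - k i ∧ (σ ^ c) (l i) = y := by
  have hk2 := H.k_add_two_le hr (s := i)
  constructor
  · rintro ⟨hyE, hyA⟩
    obtain ⟨a, han, rfl⟩ := H.cyc.exists_pow_apply_eq (H.f_mem_ground i) hyE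
    have hak : ¬ a ≤ k i := fun h ↦ hyA (H.pow_apply_f_mem h)
    refine ⟨a - k i, by omega, by omega, ?_⟩
    rw [H.pow_apply_l_eq, Nat.sub_add_cancel (by omega)]
  · rintro ⟨c, hc1, hcm, rfl⟩
    refine ⟨H.cyc.pow_apply_mem c (H.subset_ground H.l_mem), fun hcon ↦ ?_⟩
    obtain ⟨b, hb, hbe⟩ := H.mem_iff.1 hcon
    rw [H.pow_apply_l_eq] at hbe
    have := H.cyc.eq_of_pow_apply_eq (H.f_mem_ground i) (by omega) (by omega) hbe
    omega

lemma eq_of_pow_apply_l_eq (ha : a ≤ M.E.ncard - 1 - k i) (hb : b ≤ M.E.ncard - 1 - k i)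
    (hab : (σ ^ a) (l i) = (σ ^ b) (l i)) : a = b := by
  have hk2 := H.k_add_two_le hr (s := i)
  rw [H.pow_apply_l_eq, H.pow_apply_l_eq] at hab
  have := H.cyc.eq_of_pow_apply_eq (H.f_mem_ground i) (by omega) (by omega) hab
  omega

lemma pred_f_eq : σ⁻¹ (f i) = (σ ^ (M.E.ncard - 1 - k i)) (l i) := by
  have hk2 := H.k_add_two_le hr (s := i)
  rw [Equiv.Perm.inv_eq_iff_eq, ← Equiv.Perm.mul_apply, ← pow_succ', H.pow_apply_l_eq,
    show M.E.ncard - 1 - k i + 1 + k i = M.E.ncard by omega,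
    H.cyc.pow_ncard_apply (H.f_mem_ground i)]

lemma succ_l_not_mem : σ (l i) ∉ A i := by
  have hk2 := H.k_add_two_le hr (s := i)
  simpa using ((H.mem_ground_sdiff_iff hr (i := i)).2 ⟨1, le_rfl, by omega, rfl⟩).2

lemma pred_f_not_mem : σ⁻¹ (f i) ∉ A i := by
  have hk2 := H.k_add_two_le hr (s := i)
  exact ((H.mem_ground_sdiff_iff hr (i := i)).2
    ⟨M.E.ncard - 1 - k i, by omega, le_rfl, (H.pred_f_eq hr).symm⟩).2

/-- Each `A j \ A i` is an interval of `M.E \ A i`: otherwise `A j` would wrap around `A i`. -/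
lemma pow_apply_l_mem_of_lt_of_lt (hne : j ≠ i) (hac : a < c) (hcb : c < b)
    (hbm : b ≤ M.E.ncard - 1 - k i)
    (ha : (σ ^ a) (l i) ∈ A j) (hb : (σ ^ b) (l i) ∈ A j) : (σ ^ c) (l i) ∈ A j := by
  have hk2 := H.k_add_two_le hr (s := i)
  have hkj2 := H.k_add_two_le hr (s := j)
  have hlE : l i ∈ M.E := H.subset_ground H.l_mem
  obtain ⟨p, hp, hpa⟩ := H.mem_iff.1 ha
  obtain ⟨q, hq, hqb⟩ := H.mem_iff.1 hb
  rcases le_or_gt p q with hpq | hqp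
  · have hqp : q - p = b - a := by
      refine H.cyc.eq_of_pow_apply_eq (H.cyc.pow_apply_mem a hlE) (by omega) (by omega) ?_
      have h1 : (σ ^ (q - p)) ((σ ^ a) (l i)) = (σ ^ b) (l i) := by
        rw [← hpa, Equiv.Perm.pow_apply_pow_apply, Nat.sub_add_cancel hpq, hqb]
      have h2 : (σ ^ (b - a)) ((σ ^ a) (l i)) = (σ ^ b) (l i) := by
        rw [Equiv.Perm.pow_apply_pow_apply, Nat.sub_add_cancel (by omega)]
      exact h1.trans h2.symm
    rw [show c = c - a + a by omega, ← Equiv.Perm.pow_apply_pow_apply, ← hpa,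
      Equiv.Perm.pow_apply_pow_apply]
    exact H.pow_apply_f_mem (by omega)
  · exfalso
    have hpq : p - q = a + (M.E.ncard - b) := by
      refine H.cyc.eq_of_pow_apply_eq (H.cyc.pow_apply_mem b hlE) (by omega) (by omega) ?_
      have h1 : (σ ^ (p - q)) ((σ ^ b) (l i)) = (σ ^ a) (l i) := by
        rw [← hqb, Equiv.Perm.pow_apply_pow_apply, Nat.sub_add_cancel hqp.le, hpa]
      have h2 : (σ ^ (a + (M.E.ncard - b))) ((σ ^ b) (l i)) = (σ ^ a) (l i) := by
        rw [Equiv.Perm.pow_apply_pow_apply, show a + (M.E.ncard - b) + b = a + M.E.ncard by omega,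
          ← Equiv.Perm.pow_apply_pow_apply, H.cyc.pow_ncard_apply hlE]
      exact h1.trans h2.symm
    refine H.antichain i j hne.symm fun z hz ↦ ?_
    obtain ⟨u, hu, rfl⟩ := H.mem_iff.1 hz
    have hform : (σ ^ (q + (u + (M.E.ncard - (k i + b))))) (f j) = (σ ^ u) (f i) := by
      rw [add_comm q, ← Equiv.Perm.pow_apply_pow_apply, hqb, H.pow_apply_l_eq,
        Equiv.Perm.pow_apply_pow_apply, show u + (M.E.ncard - (k i + b)) + (b + k i) =
          M.E.ncard + u by omega, ← Equiv.Perm.pow_apply_pow_apply,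
        H.cyc.pow_ncard_apply (H.cyc.pow_apply_mem u (H.f_mem_ground i))]
    rw [← hform]
    exact H.pow_apply_f_mem (by omega)

lemma exists_mem_sdiffPos {x : α} (hx : x ∈ A j \ A i) :
    ∃ c ∈ sdiffPos σ l A (M.E.ncard - 1 - k i) i j, (σ ^ c) (l i) = x := by
  obtain ⟨c, hc1, hcm, rfl⟩ := (H.mem_ground_sdiff_iff hr).1 ⟨H.subset_ground hx.1, hx.2⟩
  exact ⟨c, mem_sdiffPos.2 ⟨⟨hc1, hcm⟩, hx⟩, rfl⟩

open Finset in
lemma card_le_card_biUnion_sdiffPos_of_injective (s : Finset {j // j ≠ i}) {φ : Fin r → α}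
    (hφ : Injective φ) (hφA : ∀ j ∈ s, φ j.1 ∈ A j.1 \ A i) :
    #s ≤ #(s.biUnion fun j ↦ sdiffPos σ l A (M.E.ncard - 1 - k i) i j) := by
  classical
  calc #s = #(s.image (φ ∘ Subtype.val)) :=
        (card_image_of_injective _ (hφ.comp Subtype.val_injective)).symm
    _ ≤ #((s.biUnion fun j ↦ sdiffPos σ l A (M.E.ncard - 1 - k i) i j).image (σ ^ · <| l i)) :=
        card_le_card fun x hx ↦ by
          obtain ⟨j, hj, rfl⟩ := mem_image.1 hx
          obtain ⟨c, hc, hcx⟩ := H.exists_mem_sdiffPos hr (hφA j hj)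
          exact mem_image.2 ⟨c, mem_biUnion.2 ⟨j, hj, hc⟩, hcx⟩
    _ = _ := card_image_of_injOn fun a ha b hb ↦ by
        obtain ⟨j, -, hj⟩ := mem_biUnion.1 ha
        obtain ⟨j', -, hj'⟩ := mem_biUnion.1 hb
        exact H.eq_of_pow_apply_l_eq hr (mem_sdiffPos.1 hj).1.2 (mem_sdiffPos.1 hj').1.2

open Finset in
/-- The sets `A j \ A i` are intervals of the σ-interval `M.E \ A i = {σ^c (l i) | 1 ≤ c ≤ m}`;
a subfamily missing `σ (l i)` is matched by `f`, and one missing `σ⁻¹ (f i)` by `l`. -/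
lemma card_le_card_biUnion_sdiffPos (hbound : r ≤ (M.E \ A i).ncard + 1)
    (s : Finset {j // j ≠ i}) :
    #s ≤ #(s.biUnion fun j ↦ sdiffPos σ l A (M.E.ncard - 1 - k i) i j) := by
  have hk2 := H.k_add_two_le hr (s := i)
  refine card_le_card_biUnion_of_intervals
    (fun j : {j // j ≠ i} ↦ sdiffPos σ l A (M.E.ncard - 1 - k i) i j)
    (M.E.ncard - 1 - k i) (fun j a b c ha hb hac hcb ↦ ?_) (fun s hs ↦ ?_) (fun s hs ↦ ?_) ?_ s
  · rw [mem_sdiffPos] at ha hb ⊢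
    refine ⟨⟨by omega, by omega⟩,
      H.pow_apply_l_mem_of_lt_of_lt hr j.2 hac hcb hb.1.2 ha.2.1 hb.2.1, fun hc ↦ ?_⟩
    exact ((H.mem_ground_sdiff_iff hr).2 ⟨c, by omega, by omega, rfl⟩).2 hc
  · refine H.card_le_card_biUnion_sdiffPos_of_injective hr s H.f_injective fun j hj ↦
      ⟨H.f_mem, fun hfj ↦ hs j hj (mem_sdiffPos.2 ⟨⟨le_rfl, by omega⟩, ?_⟩)⟩
    simpa using And.intro (H.succ_l_mem_of_f_mem j.2 hfj) (H.succ_l_not_mem hr)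
  · refine H.card_le_card_biUnion_sdiffPos_of_injective hr s H.l_injective fun j hj ↦
      ⟨H.l_mem, fun hlj ↦ hs j hj (mem_sdiffPos.2 ⟨⟨by omega, le_rfl⟩, ?_⟩)⟩
    rw [← H.pred_f_eq hr]
    exact ⟨H.pred_f_mem j.2 (H.f_mem_of_l_mem j.2 hlj), H.pred_f_not_mem hr⟩
  · rw [Fintype.card_subtype_compl, Fintype.card_fin, Fintype.card_unique]
    have := H.ncard_ground_sdiff hr (i := i)
    omega

lemma exists_sdr_sdiff (i : Fin r) (hbound : r ≤ (M.E \ A i).ncard + 1) :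
    ∃ g : {j // j ≠ i} → α, Injective g ∧ ∀ j, g j ∈ A j.1 \ A i := by
  classical
  obtain ⟨g, hg, hgD⟩ := (Finset.all_card_le_biUnion_card_iff_exists_injective _).1
    (H.card_le_card_biUnion_sdiffPos hr hbound)
  refine ⟨fun j ↦ (σ ^ g j) (l i), fun a b hab ↦ hg ?_, fun j ↦ (mem_sdiffPos.1 (hgD j)).2⟩
  exact H.eq_of_pow_apply_l_eq hr (mem_sdiffPos.1 (hgD a)).1.2 (mem_sdiffPos.1 (hgD b)).1.2 hab

lemma f_eq_of_cutForces (h : CutForces f A k s t) : f t = σ (f s) := by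
  obtain ⟨hne, hks, hsub⟩ := h
  have hsucc := hsub (H.succ_f_mem_sdiff hr hks)
  have hfs : f s ∉ A t := fun hfs ↦ H.antichain s t hne fun z hz ↦ by
    by_cases h : z = f s
    · rwa [h]
    · exact hsub ⟨hz, h⟩
  by_contra hne'
  exact hfs (by simpa using H.pred_mem hsucc (Ne.symm hne'))

lemma one_le_k_of_cutForces (h : CutForces f A k s t) : 1 ≤ k t := by
  by_contra! hkt
  refine H.antichain t s (Ne.symm h.1) fun z hz ↦ ?_
  obtain ⟨a, ha, rfl⟩ := H.mem_iff.1 hz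
  obtain rfl : a = 0 := by omega
  rw [pow_zero, Equiv.Perm.one_apply, H.f_eq_of_cutForces hr h]
  exact (H.succ_f_mem_sdiff hr h.2.1).1

lemma one_le_k_of_reflTransGen (hki : 1 ≤ k i)
    (hs : Relation.ReflTransGen (CutForces f A k) i s) : 1 ≤ k s := by
  induction hs with
  | refl => exact hki
  | tail _ h _ => exact H.one_le_k_of_cutForces hr h

lemma sdr_swap {ψ : Fin r → α} {p : Fin r} (hψ : Injective ψ) (hψA : ∀ j, ψ j ∈ A j)
    (hps : CutForces f A k p s) (hp : ψ p ≠ f p) (hs : ψ s = f s) :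
    Injective (ψ ∘ Equiv.swap s p) ∧ (∀ j, (ψ ∘ Equiv.swap s p) j ∈ A j) ∧
      ψ (Equiv.swap s p s) ≠ f s ∧ ψ (Equiv.swap s p p) ≠ f p := by
  have hfs := H.f_eq_of_cutForces hr hps
  refine ⟨hψ.comp (Equiv.injective _), fun j ↦ ?_, ?_, ?_⟩
  · rcases eq_or_ne j s with rfl | hjs
    · simpa using hps.2.2 ⟨hψA p, hp⟩
    rcases eq_or_ne j p with rfl | hjp
    · simpa [hs, hfs] using (H.succ_f_mem_sdiff hr hps.2.1).1
    · simpa [Equiv.swap_apply_of_ne_of_ne hjs hjp] using hψA j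
  · simpa [← hs] using hψ.ne hps.1
  · simpa [hs, hfs] using H.apply_ne hr (H.f_mem_ground p)

/-- Swap the representatives of the first `s` of the chain that is matched to `f s` and of its
predecessor, until there is none. -/
lemma exists_sdr_avoiding_f {ψ : Fin r → α} (hψ : Injective ψ)
    (hψA : ∀ j, ψ j ∈ A j) (hψi : ψ i ≠ f i) :
    ∃ ψ' : Fin r → α, Injective ψ' ∧ (∀ j, ψ' j ∈ A j) ∧ range ψ' = range ψ ∧
      ∀ s, Relation.ReflTransGen (CutForces f A k) i s → ψ' s ≠ f s := by
  induction hn : {s | Relation.ReflTransGen (CutForces f A k) i s ∧ ψ s = f s}.ncard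
    using Nat.strong_induction_on generalizing ψ with
  | _ n ih =>
  by_cases hbad : ∃ s, Relation.ReflTransGen (CutForces f A k) i s ∧ ψ s = f s
  swap
  · exact ⟨ψ, hψ, hψA, rfl, fun s hs hsf ↦ hbad ⟨s, hs, hsf⟩⟩
  obtain ⟨sb, hisb, hsb⟩ := hbad
  obtain ⟨p, s, hip, hps, hp, hs⟩ :=
    hisb.exists_rel_of_not (P := fun s ↦ ψ s ≠ f s) hψi (not_not.2 hsb)
  rw [not_not] at hs
  obtain ⟨hψ', hψ'A, hψ's, hψ'p⟩ := H.sdr_swap hr hψ hψA hps hp hs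
  have hfewer : {s' | Relation.ReflTransGen (CutForces f A k) i s' ∧ (ψ ∘ Equiv.swap s p) s' =
      f s'} ⊆ {s | Relation.ReflTransGen (CutForces f A k) i s ∧ ψ s = f s} \ {s} := by
    rintro j ⟨hij, hj⟩
    rcases eq_or_ne j s with rfl | hjs
    · exact absurd hj hψ's
    rcases eq_or_ne j p with rfl | hjp
    · exact absurd hj hψ'p
    · exact ⟨⟨hij, by simpa [Equiv.swap_apply_of_ne_of_ne hjs hjp] using hj⟩, hjs⟩
  have hlt := (ncard_le_ncard hfewer (toFinite _)).trans_lt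
    (ncard_sdiff_singleton_lt_of_mem ⟨hip.tail hps, hs⟩ (toFinite _))
  obtain ⟨ψ'', h₁, h₂, h₃, h₄⟩ := ih _ (hn ▸ hlt) hψ' hψ'A (by
    rcases eq_or_ne i s with rfl | his
    · exact hψ's
    rcases eq_or_ne i p with rfl | hip'
    · exact hψ'p
    · simpa [Equiv.swap_apply_of_ne_of_ne his hip'] using hψi) rfl
  exact ⟨ψ'', h₁, h₂, h₃.trans (EquivLike.range_comp ψ _), h₄⟩

lemma isCycInterval_sdiff_f (hks : 1 ≤ k s) :
    IsCycInterval σ (σ (f s)) (l s) (A s \ {f s}) := by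
  have hshift : ∀ a, (σ ^ a) (σ (f s)) = (σ ^ (a + 1)) (f s) := fun a ↦ by
    rw [pow_succ, Equiv.Perm.mul_apply]
  refine ⟨k s - 1, by rw [hshift, Nat.sub_add_cancel hks, H.pow_apply_f], ?_⟩
  ext z
  simp only [mem_sdiff, mem_singleton_iff, mem_ofPred_eq, hshift]
  constructor
  · rintro ⟨hz, hzf⟩
    obtain ⟨a, ha, rfl⟩ := H.mem_iff.1 hz
    obtain ⟨b, rfl⟩ : ∃ b, a = b + 1 :=
      Nat.exists_eq_add_one.2 (Nat.pos_of_ne_zero (by rintro rfl; exact hzf rfl))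
    exact ⟨b, by omega, rfl⟩
  · rintro ⟨a, ha, rfl⟩
    refine ⟨H.pow_apply_f_mem (by omega), fun h ↦ ?_⟩
    have := H.eq_of_pow_apply_f_eq hr (s := s) (a := a + 1) (b := 0) (by omega) (by omega)
      (by simpa using h)
    omega

lemma isSetAntichain_cut {C : Fin r → Prop} [DecidablePred C]
    (hC : ∀ s t, C s → CutForces f A k s t → C t) (hCk : ∀ s, C s → 1 ≤ k s) :
    IsSetAntichain fun s ↦ if C s then A s \ {f s} else A s := by
  intro u v huv hsub
  by_cases hu : C u <;> by_cases hv : C v <;> simp only [hu, hv, if_true, if_false] at hsub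
  · have hfv := H.f_eq_of_cutForces hr ⟨huv, hCk u hu, hsub.trans sdiff_subset⟩
    exact (hsub (H.succ_f_mem_sdiff hr (hCk u hu))).2 hfv.symm
  · exact hv (hC u v hu ⟨huv, hCk u hu, hsub⟩)
  · exact H.antichain u v huv (hsub.trans sdiff_subset)
  · exact H.antichain u v huv hsub

lemma isTransversalPres_cut [DecidablePred (Relation.ReflTransGen (CutForces f A k) i)]
    (hnt : ∀ S, ¬ IsTightAt M A i (f i) S) :
    IsTransversalPres M M.E
      fun s ↦ if Relation.ReflTransGen (CutForces f A k) i s then A s \ {f s} else A s := by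
  classical
  refine H.pres.of_subset_of_forall_isBase (fun s ↦ by split_ifs <;> simp) fun B hB ↦ ?_
  obtain ⟨ψ₀, hψ₀, hψ₀A, rfl⟩ := (H.pres.update_sdiff hnt).exists_sdr_of_isBase hB
    (H.pres.ncard_eq_of_isBase (fun _ ↦ H.subset_ground) H.f_injective (fun _ ↦ H.f_mem) hB)
  have hψ₀i : ψ₀ i ∈ A i \ {f i} := by simpa using hψ₀A i
  have hψ₀A' : ∀ j, ψ₀ j ∈ A j := fun j ↦ by
    by_cases hj : j = i
    · exact hj ▸ hψ₀i.1
    · simpa [update_of_ne hj] using hψ₀A j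
  obtain ⟨ψ, hψ, hψA, hψB, hψf⟩ := H.exists_sdr_avoiding_f hr hψ₀ hψ₀A' hψ₀i.2
  refine ⟨ψ, hψ, fun j ↦ ?_, hψB⟩
  split_ifs with hj
  · exact ⟨hψA j, hψf j hj⟩
  · exact hψA j

/-- Otherwise `f i` could be cut, together with the first elements of the intervals it forces,
leaving a smaller σ-interval presentation. -/
lemma exists_isTightAt
    (hmin : ∀ (f' l' : Fin r → α) (A' : Fin r → Set α),
      (∀ i, A' i ⊆ A i) → IsMultiPathPres M σ f' l' A' → A' = A) (hki : 1 ≤ k i) :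
    ∃ S, IsTightAt M A i (f i) S := by
  classical
  by_contra! hnt
  set C := Relation.ReflTransGen (CutForces f A k) i
  have hCk : ∀ s, C s → 1 ≤ k s := fun s hs ↦ H.one_le_k_of_reflTransGen hr hki hs
  have hmp : IsMultiPathPres M σ (fun s ↦ if C s then σ (f s) else f s) l
      (fun s ↦ if C s then A s \ {f s} else A s) := by
    refine ⟨H.cyc, fun s ↦ ?_, fun s ↦ ?_,
      H.isSetAntichain_cut hr (fun s t hs hst ↦ hs.tail hst) hCk, H.isTransversalPres_cut hr hnt⟩
    · dsimp only
      split_ifs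
      · exact H.cyc.mapsTo (H.f_mem_ground s)
      · exact H.f_mem_ground s
    · dsimp only
      split_ifs with hs
      · exact H.isCycInterval_sdiff_f hr (hCk s hs)
      · exact H.isCycInterval
  have hAi := congrFun (hmin _ l _ (fun s ↦ by split_ifs <;> simp) hmp) i
  simp only [C, Relation.ReflTransGen.refl, if_true] at hAi
  have hfi := H.f_mem (s := i)
  rw [← hAi] at hfi
  exact hfi.2 rfl

end Proper

variable [Finite α]

lemma le_ncard_ground_sdiff_add_one (H : IsMultiPathPresLen M σ f l A k)
    (hS : IsTightAt M A i (f i) S) : r ≤ (M.E \ A i).ncard + 1 := by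
  obtain ⟨hSi, hcap, hcount⟩ := hS
  have hfi : f i ∈ S := (hcap.symm ▸ rfl : f i ∈ S ∩ A i).1
  set J := {j | (A j ∩ S).Nonempty}
  have hl : l '' Jᶜ ⊆ (M.E \ A i) \ S := by
    rintro _ ⟨j, hj, rfl⟩
    have hji : j ≠ i := by rintro rfl; exact hj ⟨f j, H.f_mem, hfi⟩
    refine ⟨⟨H.subset_ground H.l_mem, fun hli ↦ hj ⟨f i, H.f_mem_of_l_mem hji hli, hfi⟩⟩,
      fun hlS ↦ hj ⟨l j, H.l_mem, hlS⟩⟩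
  have hinter : (M.E \ A i) ∩ S = S \ {f i} := by
    ext x
    constructor
    · rintro ⟨⟨-, hxA⟩, hxS⟩
      exact ⟨hxS, fun hx ↦ hxA (by rw [mem_singleton_iff.1 hx]; exact H.f_mem)⟩
    · rintro ⟨hxS, hxf⟩
      exact ⟨⟨hSi.subset_ground hxS, fun hxA ↦ hxf (hcap ▸ ⟨hxS, hxA⟩)⟩, hxS⟩
  have hsplit := ncard_inter_add_ncard_sdiff_eq_ncard (M.E \ A i) S (toFinite _)
  rw [hinter, ncard_sdiff_singleton_of_mem hfi] at hsplit
  have hJ := ncard_add_ncard_compl J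
  rw [Nat.card_eq_fintype_card, Fintype.card_fin] at hJ
  have hl' := ncard_le_ncard hl
  rw [ncard_image_of_injective _ H.l_injective] at hl'
  have := (ncard_pos (toFinite S)).2 ⟨f i, hfi⟩
  omega

lemma exists_sdr_sdiff_of_min (H : IsMultiPathPresLen M σ f l A k)
    (hmin : ∀ (f' l' : Fin r → α) (A' : Fin r → Set α),
      (∀ i, A' i ⊆ A i) → IsMultiPathPres M σ f' l' A' → A' = A) (i : Fin r) :
    ∃ g : {j // j ≠ i} → α, Injective g ∧ ∀ j, g j ∈ A j.1 \ A i := by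
  rcases lt_or_ge r 2 with hr | hr
  · have hempty : ∀ j : {j // j ≠ i}, False := fun j ↦
      j.2 (Fin.ext (by have := j.1.isLt; have := i.isLt; omega))
    exact ⟨fun j ↦ (hempty j).elim, fun j ↦ (hempty j).elim, fun j ↦ (hempty j).elim⟩
  refine H.exists_sdr_sdiff hr i ?_
  rcases Nat.eq_zero_or_pos (k i) with hk | hk
  · have hfE : (range f).ncard ≤ M.E.ncard :=
      ncard_le_ncard (range_subset_iff.2 H.f_mem_ground)
    rw [ncard_range_of_injective H.f_injective, Nat.card_eq_fintype_card, Fintype.card_fin] at hfE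
    have := H.ncard_ground_sdiff hr (i := i)
    omega
  · obtain ⟨S, hS⟩ := H.exists_isTightAt hr hmin hk
    exact H.le_ncard_ground_sdiff_add_one hS

end IsMultiPathPresLen

/-- Every set in a minimal σ-interval presentation of a multi-path matroid `M` is a
cocircuit of `M`; consequently any minimal σ-interval presentation is a minimal
presentation.  In particular every set of the presentation has at most `m + 1` elements,
where `m = |E| - r(M)` is the nullity (expressed as `|E \ B|` for any basis `B`). -/
theorem stmt_19 {α : Type*} [Fintype α] (M : Matroid α) (σ : Equiv.Perm α) {r : ℕ}
    (f l : Fin r → α) (A : Fin r → Set α) (hpres : IsMultiPathPres M σ f l A)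
    (hmin : ∀ (f' l' : Fin r → α) (A' : Fin r → Set α),
        (∀ i, A' i ⊆ A i) → IsMultiPathPres M σ f' l' A' → A' = A) :
    (∀ i, IsCocircuitOf M (A i)) ∧
    (∀ A' : Fin r → Set α, (∀ i, A' i ⊆ A i) → IsTransversalPres M M.E A' → A' = A) ∧
    (∀ i, ∀ B, M.IsBase B → (A i).ncard ≤ (M.E \ B).ncard + 1) := by
  obtain ⟨k, H⟩ := hpres.exists_len
  have hAE : ∀ j, A j ⊆ M.E := fun _ ↦ H.subset_ground
  have hrank : ∀ B, M.IsBase B → B.ncard = Nat.card (Fin r) := fun _ ↦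
    H.pres.ncard_eq_of_isBase hAE H.f_injective fun _ ↦ H.f_mem
  have hcoc : ∀ i, M.IsCocircuit (A i) := fun i ↦ by
    obtain ⟨g, hg, hgA⟩ := H.exists_sdr_sdiff_of_min hmin i
    exact H.pres.isCocircuit_of_sdr_sdiff hAE ⟨f i, H.f_mem⟩ g hg hgA
  refine ⟨fun i ↦ isCocircuitOf_iff_isCocircuit.2 (hcoc i), fun A' hA'A hA' ↦ ?_,
    fun i B hB ↦ (hcoc i).ncard_le_ncard_sdiff_add_one hB⟩
  funext i
  exact (hcoc i).eq_of_subset (fun B hB ↦ hA'.inter_nonempty_of_isBase hB (hrank B hB) i)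
    (hA'A i)
end
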